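/- arXiv:1810.01187 — 9 statements merged into one kernel-verified Lean document; each statement's English description precedes it below -/
import Mathlib

section
/- Let L ≥ K ≥ 1 be integers and let w : [L] → [0, 1] satisfy w(1) ≥ w(2) ≥ … ≥ w(L). Let ŵ, θ, g, h : [L] → ℝ satisfy |ŵ(i) − w(i)| ≤ g(i) and |θ(i) − ŵ(i)| ≤ h(i) for all i ∈ [L], and suppose Σ_{k=1}^K [∏_{j=1}^{k−1} (1 − w(j))] · θ(k) ≥ Σ_{k=1}^K [∏_{j=1}^{k−1} (1 − w(j))] · w(k). Let S = (i_1, …, i_K) be distinct items with θ(i_1) ≥ θ(i_2) ≥ … ≥ θ(i_K) ≥ θ(j) for every j ∉ {i_1, …, i_K}. Then Σ_{k=1}^K [∏_{j=1}^{k−1} (1 − w(i_j))] · (g(i_k) + h(i_k)) ≥ r(S* | w) − r(S | w), where S* = (1, …, K). -/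
/-!
Write both rewards as cascade sums, `1 - ∏ₖ (1 - xₖ) = ∑ₖ (∏_{j<k} (1 - xⱼ)) xₖ`, with prefix
products `Qₖ` along `S*` and `Pₖ` along `S`. Then
`r(S*) ≤ ∑ Qₖ θ(k) ≤ ∑ Qₖ θ(iₖ) ≤ ∑ Pₖ (w(iₖ) + g(iₖ) + h(iₖ)) = r(S) + F(S)`.
The middle step is Abel summation: `Q` is nonincreasing and nonnegative, and since `S` takes the
items of largest `θ`, every prefix sum of `θ` along `S` dominates the one along `S*`. The last step
uses `θ ≤ w + g + h` and `Qₖ ≤ Pₖ`: among `k`-element sets the first `k` items (those of largest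
`w`) minimise `∏ (1 - w)`.
-/

open Finset

namespace Finset

section Order

variable {ι R : Type*} [LinearOrder ι]

theorem one_sub_prod_one_sub_eq_sum [CommRing R] [Fintype ι] [LocallyFiniteOrderBot ι]
    (f : ι → R) : 1 - ∏ i, (1 - f i) = ∑ i, (∏ j ∈ Iio i, (1 - f j)) * f i := by
  rw [prod_one_sub_ordered, sub_sub_cancel]
  refine sum_congr rfl fun i _ => ?_
  rw [filter_gt_eq_Iio, mul_comm]

theorem sum_mul_nonneg_of_sum_filter_le_nonneg [CommSemiring R] [PartialOrder R]
    [IsOrderedRing R] {Q d : ι → R} (hQ : Antitone Q) (hQ0 : ∀ k, 0 ≤ Q k) (s : Finset ι)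
    (hd : ∀ k ∈ s, 0 ≤ ∑ j ∈ s with j ≤ k, d j) : 0 ≤ ∑ k ∈ s, Q k * d k := by
  -- Abel summation, inducting on the largest element: `Q c` is the smallest weight on `s`.
  suffices key : ∀ c, (∀ x ∈ s, x ≤ c) → Q c * ∑ k ∈ s, d k ≤ ∑ k ∈ s, Q k * d k by
    rcases s.eq_empty_or_nonempty with rfl | hs
    · simp
    have hmax : ∀ x ∈ s, x ≤ s.max' hs := fun x hx => le_max' s x hx
    refine (mul_nonneg (hQ0 _) ?_).trans (key _ hmax)
    simpa [filter_true_of_mem hmax] using hd _ (max'_mem s hs)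
  induction s using Finset.induction_on_max with
  | empty => simp
  | insert a s ha ih =>
    intro c hc
    have hsd : ∀ k ∈ s, 0 ≤ ∑ j ∈ s with j ≤ k, d j := fun k hk => by
      have hfilter : {j ∈ insert a s | j ≤ k} = {j ∈ s | j ≤ k} := by
        rw [filter_insert, if_neg (not_le.2 (ha k hk))]
      simpa [hfilter] using hd k (mem_insert_of_mem hk)
    have htotal : 0 ≤ d a + ∑ k ∈ s, d k := by
      simpa [filter_true_of_mem fun x hx => (mem_insert.1 hx).elim le_of_eq
        fun hx => (ha x hx).le, sum_insert (fun h => lt_irrefl a (ha a h))] using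
        hd a (mem_insert_self a s)
    rw [sum_insert fun h => lt_irrefl a (ha a h), sum_insert fun h => lt_irrefl a (ha a h)]
    calc Q c * (d a + ∑ k ∈ s, d k) ≤ Q a * (d a + ∑ k ∈ s, d k) :=
          mul_le_mul_of_nonneg_right (hQ (hc a (mem_insert_self a s))) htotal
      _ ≤ Q a * d a + ∑ k ∈ s, Q k * d k := by
          rw [mul_add]
          exact add_le_add le_rfl (ih hsd a fun x hx => (ha x hx).le)

theorem sum_mul_le_sum_mul_of_sum_filter_le [CommRing R] [PartialOrder R] [IsOrderedRing R]
    {Q a b : ι → R} (hQ : Antitone Q) (hQ0 : ∀ k, 0 ≤ Q k) (s : Finset ι)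
    (hab : ∀ k ∈ s, ∑ j ∈ s with j ≤ k, a j ≤ ∑ j ∈ s with j ≤ k, b j) :
    ∑ k ∈ s, Q k * a k ≤ ∑ k ∈ s, Q k * b k := by
  have := sum_mul_nonneg_of_sum_filter_le_nonneg hQ hQ0 s (d := b - a) fun k hk => by
    simpa [sum_sub_distrib] using hab k hk
  simpa [mul_sub, sum_sub_distrib] using this

end Order

section Exchange

variable {α M R : Type*} [DecidableEq α] {s t : Finset α}

theorem sum_le_sum_of_card_eq_of_forall_le [AddCommMonoid M] [PartialOrder M]
    [IsOrderedAddMonoid M] (f : α → M) (hst : #s = #t)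
    (htop : ∀ x ∈ t, ∀ y ∉ t, f y ≤ f x) : ∑ y ∈ s, f y ≤ ∑ x ∈ t, f x := by
  let e : (s \ t : Finset α) ≃ (t \ s : Finset α) := equivOfCardEq (card_sdiff_comm hst)
  have hsdiff : ∑ y ∈ s \ t, f y ≤ ∑ x ∈ t \ s, f x := by
    rw [← sum_coe_sort (s \ t), ← sum_coe_sort (t \ s), ← e.sum_comp]
    exact sum_le_sum fun y _ =>
      htop _ (mem_sdiff.1 (e y).2).1 _ (mem_sdiff.1 y.2).2
  rw [← sum_inter_add_sum_sdiff s t, ← sum_inter_add_sum_sdiff t s, inter_comm]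
  exact add_le_add le_rfl hsdiff

theorem prod_le_prod_of_card_eq_of_forall_le [CommSemiring R] [PartialOrder R]
    [IsOrderedRing R] {f : α → R} (hf0 : ∀ x, 0 ≤ f x) (hst : #s = #t)
    (hbot : ∀ x ∈ t, ∀ y ∉ t, f x ≤ f y) : ∏ x ∈ t, f x ≤ ∏ y ∈ s, f y := by
  let e : (t \ s : Finset α) ≃ (s \ t : Finset α) := equivOfCardEq (card_sdiff_comm hst.symm)
  have hsdiff : ∏ x ∈ t \ s, f x ≤ ∏ y ∈ s \ t, f y := by
    rw [← prod_coe_sort (s \ t), ← prod_coe_sort (t \ s), ← e.prod_comp]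
    exact prod_le_prod (fun _ _ => hf0 _) fun x _ =>
      hbot _ (mem_sdiff.1 x.2).1 _ (mem_sdiff.1 (e x).2).2
  rw [← prod_inter_mul_prod_sdiff s t, ← prod_inter_mul_prod_sdiff t s, inter_comm]
  exact mul_le_mul_of_nonneg_left hsdiff (prod_nonneg fun _ _ => hf0 _)

end Exchange

end Finset

namespace Fin

variable {K L : ℕ} (hKL : K ≤ L) {i : Fin K → Fin L}

theorem prod_Iio_castLE_le_prod_Iio {R : Type*} [CommSemiring R] [PartialOrder R]
    [IsOrderedRing R] {f : Fin L → R} (hf : Monotone f) (hf0 : ∀ x, 0 ≤ f x)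
    (hi : Function.Injective i) (k : Fin K) :
    ∏ j ∈ Iio k, f (Fin.castLE hKL j) ≤ ∏ j ∈ Iio k, f (i j) := by
  rw [← prod_Iio_castLE, ← prod_image hi.injOn]
  refine prod_le_prod_of_card_eq_of_forall_le hf0 ?_ fun x hx y hy => hf ?_
  · simp [card_image_of_injective _ hi]
  · exact ((mem_Iio.1 hx).trans_le (not_lt.1 (mt mem_Iio.2 hy))).le

theorem sum_Iic_castLE_le_sum_Iic {M : Type*} [AddCommMonoid M] [PartialOrder M]
    [IsOrderedAddMonoid M] {θ : Fin L → M} (hi : Function.Injective i)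
    (hsort : Antitone (θ ∘ i)) (htop : ∀ y ∉ Set.range i, ∀ k, θ y ≤ θ (i k)) (k : Fin K) :
    ∑ j ∈ Iic k, θ (Fin.castLE hKL j) ≤ ∑ j ∈ Iic k, θ (i j) := by
  rw [← sum_Iic_castLE, ← sum_image hi.injOn]
  refine sum_le_sum_of_card_eq_of_forall_le θ (by simp [card_image_of_injective _ hi]) ?_
  intro x hx y hy
  obtain ⟨j, hj, rfl⟩ := mem_image.1 hx
  by_cases hyi : y ∈ Set.range i
  · obtain ⟨l, rfl⟩ := hyi
    have hkl : k < l := not_le.1 fun hlk => hy (mem_image_of_mem i (mem_Iic.2 hlk))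
    exact hsort ((mem_Iic.1 hj).trans hkl.le)
  · exact htop y hyi j

end Fin

/-- (Key deterministic step of Lemma transfer-one for TS-Cascade.)
Items are `Fin L`, sorted so that `w` is nonincreasing; `S* = (0, …, K-1)` (the top `K` items).
If the empirical means `ŵ` and Thompson samples `θ` are within `g` resp. `h` of `w`, and the
weighted Thompson samples of the optimal items dominate the corresponding weighted means
(inequality (2) of the paper), then the list `S = (i 0, …, i (K-1))` chosen greedily according to
`θ` satisfies `F(S) ≥ r(S* | w) - r(S | w)`. -/
theorem stmt_3 (L K : ℕ) (hK : 1 ≤ K) (hKL : K ≤ L)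
    (w : Fin L → ℝ) (hw01 : ∀ j, 0 ≤ w j ∧ w j ≤ 1)
    (hmono : ∀ a b : Fin L, a ≤ b → w b ≤ w a)
    (wHat θ g h : Fin L → ℝ)
    (hg : ∀ j, |wHat j - w j| ≤ g j) (hh : ∀ j, |θ j - wHat j| ≤ h j)
    (hcrucial :
      ∑ k : Fin K, (∏ j ∈ Finset.Iio k, (1 - w (Fin.castLE hKL j))) * w (Fin.castLE hKL k)
      ≤ ∑ k : Fin K, (∏ j ∈ Finset.Iio k, (1 - w (Fin.castLE hKL j))) * θ (Fin.castLE hKL k))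
    (i : Fin K → Fin L) (hi : Function.Injective i)
    (hsort : ∀ k l : Fin K, k ≤ l → θ (i l) ≤ θ (i k))
    (htop : ∀ j : Fin L, j ∉ Set.range i → θ j ≤ θ (i ⟨K - 1, by omega⟩)) :
    (1 - ∏ k : Fin K, (1 - w (Fin.castLE hKL k))) - (1 - ∏ k : Fin K, (1 - w (i k)))
      ≤ ∑ k : Fin K, (∏ j ∈ Finset.Iio k, (1 - w (i j))) * (g (i k) + h (i k)) := by
  have hf : Monotone fun x => 1 - w x := fun a b hab => sub_le_sub_left (hmono a b hab) 1
  have hf0 : ∀ x, 0 ≤ 1 - w x := fun x => sub_nonneg.2 (hw01 x).2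
  set Q : Fin K → ℝ := fun k => ∏ j ∈ Iio k, (1 - w (Fin.castLE hKL j))
  set P : Fin K → ℝ := fun k => ∏ j ∈ Iio k, (1 - w (i j))
  have hQ : Antitone Q :=
    (prod_anti_set_of_le_one (fun _ => hf0 _) fun x => sub_le_self 1 (hw01 _).1).comp_monotone
      fun _ _ => Iio_subset_Iio
  have hQ0 : ∀ k, 0 ≤ Q k := fun k => prod_nonneg fun _ _ => hf0 _
  have hθ : ∀ x, θ x ≤ w x + (g x + h x) := fun x => by
    linarith [le_abs_self (θ x - w x), abs_sub_le (θ x) (wHat x) (w x), hg x, hh x]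
  have hbound0 : ∀ x, 0 ≤ w x + (g x + h x) := fun x => by
    linarith [(hw01 x).1, (abs_nonneg _).trans (hg x), (abs_nonneg _).trans (hh x)]
  have hgreedy : ∑ k, Q k * θ (Fin.castLE hKL k) ≤ ∑ k, Q k * θ (i k) := by
    refine sum_mul_le_sum_mul_of_sum_filter_le hQ hQ0 univ fun k _ => ?_
    rw [filter_ge_eq_Iic]
    refine Fin.sum_Iic_castLE_le_sum_Iic hKL hi hsort (fun y hy l => (htop y hy).trans ?_) k
    exact hsort _ _ (Fin.le_iff_val_le_val.2 (Nat.le_sub_one_of_lt l.isLt))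
  have hstep : ∀ k, Q k * θ (i k) ≤ P k * (w (i k) + (g (i k) + h (i k))) := fun k =>
    (mul_le_mul_of_nonneg_left (hθ _) (hQ0 k)).trans <| mul_le_mul_of_nonneg_right
      (Fin.prod_Iio_castLE_le_prod_Iio hKL hf hf0 hi k) (hbound0 _)
  rw [one_sub_prod_one_sub_eq_sum, one_sub_prod_one_sub_eq_sum, sub_le_iff_le_add']
  calc ∑ k, Q k * w (Fin.castLE hKL k) ≤ ∑ k, Q k * θ (i k) := hcrucial.trans hgreedy
    _ ≤ ∑ k, P k * (w (i k) + (g (i k) + h (i k))) := sum_le_sum fun k _ => hstep k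
    _ = _ := by simp only [P, mul_add, sum_add_distrib]
end

section
/- Let Z be a standard Gaussian random variable (law N(0,1) on ℝ). Let K ≥ 1 and let α, w, ŵ, σ, g : {1, …, K} → ℝ satisfy, for every k: α_k ≥ 0, σ_k ≥ 0, 0 ≤ g_k ≤ 48 σ_k, and ŵ_k ≥ w_k − g_k. Then the probability that Σ_{k=1}^K α_k (ŵ_k + Z σ_k) ≥ Σ_{k=1}^K α_k w_k is at least 1/(4 √π e^{8064}). -/
/-!
The event contains `{Z ≥ 48}`: once `Z ≥ 48`, each perturbation `Z σ_k` dominates the gap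
`g_k ≤ 48 σ_k`, so the inequality holds term by term. The Gaussian mass of `[48, 49]` is at least
the density at `49`, namely `e^{-2401/2} / √(2π)`, which exceeds `1 / (4 √π e^{8064})`.
-/

open ProbabilityTheory MeasureTheory Real Set NNReal

lemma gaussianPDFReal_antitoneOn (μ : ℝ) (v : ℝ≥0) :
    AntitoneOn (gaussianPDFReal μ v) (Ici μ) := by
  intro x hx y _ hxy
  simp only [gaussianPDFReal_def]
  gcongr
  exact sub_nonneg.2 hx

lemma ofReal_mul_gaussianPDFReal_le_gaussianReal_Icc {μ : ℝ} {v : ℝ≥0} (hv : v ≠ 0) {a b : ℝ}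
    (ha : μ ≤ a) (hab : a ≤ b) :
    ENNReal.ofReal ((b - a) * gaussianPDFReal μ v b) ≤ gaussianReal μ v (Icc a b) :=
  calc ENNReal.ofReal ((b - a) * gaussianPDFReal μ v b)
      = ∫⁻ _ in Icc a b, ENNReal.ofReal (gaussianPDFReal μ v b) := by
        rw [setLIntegral_const, Real.volume_Icc, ENNReal.ofReal_mul (by linarith), mul_comm]
    _ ≤ ∫⁻ x in Icc a b, gaussianPDF μ v x :=
        setLIntegral_mono (measurable_gaussianPDF μ v) fun x hx => ENNReal.ofReal_le_ofReal <|
          gaussianPDFReal_antitoneOn μ v (ha.trans hx.1) (ha.trans hab) hx.2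
    _ = gaussianReal μ v (Icc a b) := (gaussianReal_apply μ hv _).symm

lemma one_div_four_sqrt_pi_exp_le_gaussianPDFReal :
    1 / (4 * √π * exp 8064) ≤ gaussianPDFReal 0 1 49 := by
  have hsqrt : √(2 * π) ≤ 4 * √π := by
    rw [sqrt_mul zero_le_two]
    gcongr
    nlinarith [sq_sqrt (zero_le_two : (0 : ℝ) ≤ 2), sqrt_nonneg 2]
  calc 1 / (4 * √π * exp 8064) = (4 * √π)⁻¹ * exp (-8064) := by rw [exp_neg]; field_simp
    _ ≤ (√(2 * π))⁻¹ * exp (-(49 - 0) ^ 2 / (2 * 1)) := by gcongr; norm_num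
    _ = gaussianPDFReal 0 1 49 := by simp [gaussianPDFReal_def]

lemma sum_mul_le_sum_mul_add_mul {ι : Type*} (s : Finset ι) {α w wHat σ : ι → ℝ} {c z : ℝ}
    (hα : ∀ k, 0 ≤ α k) (hσ : ∀ k, 0 ≤ σ k) (hw : ∀ k, w k ≤ wHat k + c * σ k) (hcz : c ≤ z) :
    ∑ k ∈ s, α k * w k ≤ ∑ k ∈ s, α k * (wHat k + z * σ k) := by
  gcongr with k
  · exact hα k
  · exact (hw k).trans (by gcongr; exact hσ k)

theorem stmt_5_general (K : ℕ) (α w wHat σ g : Fin K → ℝ)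
    (hα : ∀ k, 0 ≤ α k) (hσ : ∀ k, 0 ≤ σ k)
    (hg48 : ∀ k, g k ≤ 48 * σ k)
    (hwHat : ∀ k, w k - g k ≤ wHat k) :
    ENNReal.ofReal (1 / (4 * Real.sqrt Real.pi * Real.exp 8064))
      ≤ gaussianReal 0 1 {z : ℝ | ∑ k, α k * w k ≤ ∑ k, α k * (wHat k + z * σ k)} := by
  have hw : ∀ k, w k ≤ wHat k + 48 * σ k := fun k => by linarith [hwHat k, hg48 k]
  calc ENNReal.ofReal (1 / (4 * √π * exp 8064))
      ≤ ENNReal.ofReal ((49 - 48) * gaussianPDFReal 0 1 49) := by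
        rw [show (49 - 48 : ℝ) = 1 by norm_num, one_mul]
        exact ENNReal.ofReal_le_ofReal one_div_four_sqrt_pi_exp_le_gaussianPDFReal
    _ ≤ gaussianReal 0 1 (Icc 48 49) :=
        ofReal_mul_gaussianPDFReal_le_gaussianReal_Icc one_ne_zero (by norm_num) (by norm_num)
    _ ≤ _ := measure_mono fun z hz => sum_mul_le_sum_mul_add_mul _ hα hσ hw hz.1

/-- If `Z ~ N(0,1)` (standard Gaussian measure on `ℝ`) and for all `k` we have
`α k ≥ 0`, `σ k ≥ 0`, `0 ≤ g k ≤ 48 σ k`, `ŵ k ≥ w k - g k`, then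
`P(∑ α k (ŵ k + Z σ k) ≥ ∑ α k w k) ≥ 1 / (4 √π e^{8064})`. -/
theorem stmt_5 (K : ℕ) (hK : 1 ≤ K) (α w wHat σ g : Fin K → ℝ)
    (hα : ∀ k, 0 ≤ α k) (hσ : ∀ k, 0 ≤ σ k)
    (hg0 : ∀ k, 0 ≤ g k) (hg48 : ∀ k, g k ≤ 48 * σ k)
    (hwHat : ∀ k, w k - g k ≤ wHat k) :
    ENNReal.ofReal (1 / (4 * Real.sqrt Real.pi * Real.exp 8064))
      ≤ gaussianReal 0 1 {z : ℝ | ∑ k, α k * w k ≤ ∑ k, α k * (wHat k + z * σ k)} :=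
  stmt_5_general K α w wHat σ g hα hσ hg48 hwHat
end

section
/- Let t ≥ 1 and L ≥ 1 be integers, and for each i ∈ [L] let ν_i ∈ [0, 1] and N_i ∈ ℕ. Define σ_i = max{ √(ν_i · log(t+1)/(N_i + 1)), log(t+1)/(N_i + 1) }, g_i = √(16 ν_i log(t+1)/(N_i + 1)) + 24 log(t+1)/(N_i + 1), and h_i = √(log(t+1)) · g_i. If Z is a standard Gaussian random variable, then the probability that there exists i ∈ [L] with |Z| · σ_i > h_i is at most 1/(2 (t+1)^3). -/
/-!
Since `max a b ≤ a + 6 b` for `a, b ≥ 0`, every `σ_i` is at most `g_i / 4`, so `|Z| σ_i > h_i`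
forces `|Z| > 4 √(log (t+1))`, one event for all items at once. By the Chernoff bound for the
sub-Gaussian variable `Z`, this event has probability at most
`2 exp (-8 log (t+1)) = 2 / (t+1)^8 ≤ 1 / (2 (t+1)^3)`.
-/

open ProbabilityTheory MeasureTheory Real
open scoped NNReal

lemma hasSubgaussianMGF_id_gaussianReal (v : ℝ≥0) :
    HasSubgaussianMGF id v (gaussianReal 0 v) where
  integrable_exp_mul := integrable_exp_mul_gaussianReal
  mgf_le t := by simp [mgf_id_gaussianReal]

lemma gaussianReal_lt_abs_le {c : ℝ} (hc : 0 ≤ c) (v : ℝ≥0) :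
    gaussianReal 0 v {z | c < |z|} ≤ ENNReal.ofReal (2 * exp (-c ^ 2 / (2 * v))) := by
  have hZ := hasSubgaussianMGF_id_gaussianReal v
  have hcover : {z : ℝ | c < |z|} ⊆ {z | c ≤ id z} ∪ {z | c ≤ (-id) z} := by
    intro z (hz : c < |z|)
    rcases lt_abs.1 hz with h | h
    · exact Or.inl h.le
    · exact Or.inr h.le
  calc gaussianReal 0 v {z | c < |z|}
      ≤ gaussianReal 0 v {z | c ≤ id z} + gaussianReal 0 v {z | c ≤ (-id) z} :=
        (measure_mono hcover).trans (measure_union_le _ _)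
    _ ≤ ENNReal.ofReal (exp (-c ^ 2 / (2 * v))) + ENNReal.ofReal (exp (-c ^ 2 / (2 * v))) := by
        rw [← ofReal_measureReal, ← ofReal_measureReal]
        gcongr
        exacts [hZ.measure_ge_le hc, hZ.neg.measure_ge_le hc]
    _ = ENNReal.ofReal (2 * exp (-c ^ 2 / (2 * v))) := by
        rw [← ENNReal.ofReal_add (by positivity) (by positivity), ← two_mul]

lemma four_mul_sqrt_mul_max_le {ν ℓ n : ℝ} (hℓ : 0 ≤ ℓ) (hn : 0 < n) :
    4 * √ℓ * max √(ν * ℓ / n) (ℓ / n) ≤ √ℓ * (√(16 * ν * ℓ / n) + 24 * ℓ / n) := by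
  have h16 : √(16 * ν * ℓ / n) = 4 * √(ν * ℓ / n) := by
    rw [mul_assoc, mul_div_assoc, sqrt_mul (by norm_num), show (16 : ℝ) = 4 ^ 2 by norm_num,
      sqrt_sq (by norm_num)]
  have hmax : 4 * max √(ν * ℓ / n) (ℓ / n) ≤ √(16 * ν * ℓ / n) + 24 * ℓ / n := by
    have : 0 ≤ ℓ / n := by positivity
    calc 4 * max √(ν * ℓ / n) (ℓ / n) ≤ 4 * (√(ν * ℓ / n) + 6 * (ℓ / n)) := by
          gcongr
          exact max_le (by linarith) (by linarith [sqrt_nonneg (ν * ℓ / n)])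
      _ = √(16 * ν * ℓ / n) + 24 * ℓ / n := by rw [h16]; ring
  calc 4 * √ℓ * max √(ν * ℓ / n) (ℓ / n) = √ℓ * (4 * max √(ν * ℓ / n) (ℓ / n)) := by ring
    _ ≤ √ℓ * (√(16 * ν * ℓ / n) + 24 * ℓ / n) := by gcongr

lemma two_mul_exp_neg_eight_mul_log_le {x : ℝ} (hx : 2 ≤ x) :
    2 * exp (-(8 * log x)) ≤ 1 / (2 * x ^ 3) := by
  have hx8 : exp (8 * log x) = x ^ 8 := by
    rw [show (8 : ℝ) * log x = ((8 : ℕ) : ℝ) * log x by norm_num, exp_nat_mul,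
      exp_log (by linarith)]
  have hx5 : (2 : ℝ) ^ 5 ≤ x ^ 5 := pow_le_pow_left₀ (by norm_num) hx 5
  rw [exp_neg, hx8, ← div_eq_mul_inv, div_le_div_iff₀ (by positivity) (by positivity)]
  nlinarith [pow_pos (show 0 < x by linarith) 3]

theorem stmt_6_general (t L : ℕ) (ht : 1 ≤ t)
    (ν : Fin L → ℝ) (N : Fin L → ℕ)
    (σ g h : Fin L → ℝ)
    (hσ : ∀ i, σ i = max (Real.sqrt (ν i * Real.log (t + 1) / (N i + 1)))
        (Real.log (t + 1) / (N i + 1)))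
    (hg : ∀ i, g i = Real.sqrt (16 * ν i * Real.log (t + 1) / (N i + 1))
        + 24 * Real.log (t + 1) / (N i + 1))
    (hh : ∀ i, h i = Real.sqrt (Real.log (t + 1)) * g i) :
    gaussianReal 0 1 {z : ℝ | ∃ i : Fin L, h i < |z| * σ i}
      ≤ ENNReal.ofReal (1 / (2 * (t + 1) ^ 3)) := by
  set ℓ := log ((t : ℝ) + 1)
  have ht2 : (2 : ℝ) ≤ t + 1 := by norm_cast; omega
  have hℓ : 0 ≤ ℓ := log_nonneg (by linarith)
  have hevent : {z : ℝ | ∃ i, h i < |z| * σ i} ⊆ {z | 4 * √ℓ < |z|} := by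
    rintro z ⟨i, hi⟩
    have hσ0 : 0 ≤ σ i := hσ i ▸ (sqrt_nonneg _).trans (le_max_left _ _)
    have hσh : 4 * √ℓ * σ i ≤ h i := by
      rw [hσ i, hh i, hg i]
      exact four_mul_sqrt_mul_max_le hℓ (by positivity)
    exact lt_of_mul_lt_mul_right (hσh.trans_lt hi) hσ0
  calc gaussianReal 0 1 {z : ℝ | ∃ i, h i < |z| * σ i}
      ≤ gaussianReal 0 1 {z | 4 * √ℓ < |z|} := measure_mono hevent
    _ ≤ ENNReal.ofReal (2 * exp (-(4 * √ℓ) ^ 2 / (2 * (1 : ℝ≥0)))) :=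
        gaussianReal_lt_abs_le (by positivity) 1
    _ = ENNReal.ofReal (2 * exp (-(8 * ℓ))) := by
        rw [mul_pow, sq_sqrt hℓ, NNReal.coe_one]
        ring_nf
    _ ≤ ENNReal.ofReal (1 / (2 * (t + 1) ^ 3)) :=
        ENNReal.ofReal_le_ofReal (two_mul_exp_neg_eight_mul_log_le ht2)

/-- With `σ_i, g_i, h_i` the TS-Cascade widths built from `ν_i ∈ [0,1]` and counts
`N_i`, for a standard Gaussian `Z` the probability that some item `i` satisfies
`|Z| σ_i > h_i` is at most `1 / (2 (t+1)^3)`. -/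
theorem stmt_6 (t L : ℕ) (ht : 1 ≤ t) (hL : 1 ≤ L)
    (ν : Fin L → ℝ) (hν : ∀ i, 0 ≤ ν i ∧ ν i ≤ 1) (N : Fin L → ℕ)
    (σ g h : Fin L → ℝ)
    (hσ : ∀ i, σ i = max (Real.sqrt (ν i * Real.log (t + 1) / (N i + 1)))
        (Real.log (t + 1) / (N i + 1)))
    (hg : ∀ i, g i = Real.sqrt (16 * ν i * Real.log (t + 1) / (N i + 1))
        + 24 * Real.log (t + 1) / (N i + 1))
    (hh : ∀ i, h i = Real.sqrt (Real.log (t + 1)) * g i) :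
    gaussianReal 0 1 {z : ℝ | ∃ i : Fin L, h i < |z| * σ i}
      ≤ ENNReal.ofReal (1 / (2 * (t + 1) ^ 3)) :=
  stmt_6_general t L ht ν N σ g h hσ hg hh
end

section
/- Let K ≥ 1 be an integer, let ε > 0, and let Δ_1 ≥ Δ_2 ≥ … ≥ Δ_K be real numbers with Δ_K > 2ε. Then Δ_1 / (Δ_1 − 2ε)² + Σ_{j=2}^K Δ_j · ( 1/(Δ_j − 2ε)² − 1/(Δ_{j−1} − 2ε)² ) ≤ 2 (Δ_K − ε) / (Δ_K − 2ε)². -/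
/-! Writing `F x = (2x - c)/(x - c)²`, the left-hand side for `K = 1` is at most `F(Δ_1)`, and
appending the `j`-th summand to the bound `F(Δ_{j-1})` gives at most `F(Δ_j)`, because
`F b - F a - b (1/(b - c)² - 1/(a - c)²) = (b - c)(a - b)² / ((a - c)²(b - c)²) ≥ 0` for `b > c`.
Telescoping yields the claim with `c = 2ε`. -/

open Finset

noncomputable def gapBound (c x : ℝ) : ℝ := (2 * x - c) / (x - c) ^ 2

lemma gapBound_add_le (a : ℝ) {b c : ℝ} (hb : c < b) :
    gapBound c a + b * (1 / (b - c) ^ 2 - 1 / (a - c) ^ 2) ≤ gapBound c b := by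
  have hbc : b - c ≠ 0 := (sub_pos.2 hb).ne'
  rcases eq_or_ne (a - c) 0 with hac | hac
  · -- junk case: both terms with denominator `(a - c)²` vanish
    simp only [gapBound, hac, ne_eq, OfNat.ofNat_ne_zero, not_false_eq_true, zero_pow, div_zero,
      sub_zero, zero_add, mul_one_div]
    exact div_le_div_of_nonneg_right (by linarith) (sq_nonneg _)
  have gap : gapBound c b - (gapBound c a + b * (1 / (b - c) ^ 2 - 1 / (a - c) ^ 2)) =
      (b - c) * (a - b) ^ 2 / ((a - c) ^ 2 * (b - c) ^ 2) := by
    unfold gapBound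
    field_simp
    ring
  rw [← sub_nonneg, gap]
  exact div_nonneg (mul_nonneg (sub_pos.2 hb).le (sq_nonneg _)) (by positivity)

lemma telescoping_le_gapBound {c : ℝ} (Δ : ℕ → ℝ) {K : ℕ} (hK : 1 ≤ K)
    (hΔ : ∀ j ∈ Icc 1 K, c < Δ j) :
    Δ 1 / (Δ 1 - c) ^ 2 + ∑ j ∈ Icc 2 K, Δ j * (1 / (Δ j - c) ^ 2 - 1 / (Δ (j - 1) - c) ^ 2)
      ≤ gapBound c (Δ K) := by
  induction K, hK using Nat.le_induction with
  | base =>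
    have h1 : c < Δ 1 := hΔ 1 (by simp)
    rw [Icc_eq_empty (by omega), sum_empty, add_zero, gapBound]
    exact div_le_div_of_nonneg_right (by linarith) (sq_nonneg _)
  | succ K hK ih =>
    rw [sum_Icc_succ_top (by omega), Nat.add_sub_cancel, ← add_assoc]
    calc _ ≤ gapBound c (Δ K) + Δ (K + 1) * (1 / (Δ (K + 1) - c) ^ 2 - 1 / (Δ K - c) ^ 2) := by
          gcongr
          exact ih fun j hj => hΔ j (Icc_subset_Icc_right K.le_succ hj)
      _ ≤ gapBound c (Δ (K + 1)) := gapBound_add_le _ (hΔ (K + 1) (by simp))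

theorem stmt_9_general (K : ℕ) (hK : 1 ≤ K) (ε : ℝ) (Δ : ℕ → ℝ)
    (hmono : ∀ j k : ℕ, 1 ≤ j → j ≤ k → k ≤ K → Δ k ≤ Δ j)
    (hΔK : 2 * ε < Δ K) :
    Δ 1 / (Δ 1 - 2 * ε) ^ 2
      + ∑ j ∈ Finset.Icc 2 K, Δ j * (1 / (Δ j - 2 * ε) ^ 2 - 1 / (Δ (j - 1) - 2 * ε) ^ 2)
      ≤ 2 * (Δ K - ε) / (Δ K - 2 * ε) ^ 2 := by
  have hΔ : ∀ j ∈ Icc 1 K, 2 * ε < Δ j := fun j hj =>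
    hΔK.trans_le (hmono j K (mem_Icc.1 hj).1 (mem_Icc.1 hj).2 le_rfl)
  calc _ ≤ gapBound (2 * ε) (Δ K) := telescoping_le_gapBound Δ hK hΔ
    _ = _ := by rw [gapBound]; ring

/-- For gaps `Δ_1 ≥ … ≥ Δ_K > 2ε` (items indexed `1, …, K`),
`Δ_1/(Δ_1 - 2ε)² + ∑_{j=2}^K Δ_j (1/(Δ_j - 2ε)² - 1/(Δ_{j-1} - 2ε)²)
  ≤ 2 (Δ_K - ε)/(Δ_K - 2ε)²`. -/
theorem stmt_9 (K : ℕ) (hK : 1 ≤ K) (ε : ℝ) (hε : 0 < ε) (Δ : ℕ → ℝ)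
    (hmono : ∀ j k : ℕ, 1 ≤ j → j ≤ k → k ≤ K → Δ k ≤ Δ j)
    (hΔK : 2 * ε < Δ K) :
    Δ 1 / (Δ 1 - 2 * ε) ^ 2
      + ∑ j ∈ Finset.Icc 2 K, Δ j * (1 / (Δ j - 2 * ε) ^ 2 - 1 / (Δ (j - 1) - 2 * ε) ^ 2)
      ≤ 2 * (Δ K - ε) / (Δ K - 2 * ε) ^ 2 :=
  stmt_9_general K hK ε Δ hmono hΔK
end

section
/- Let ε ∈ [0, 1] and let K ≥ 1 be an integer such that 0 < (1 − ε)/K < (1 + ε)/K < 1/4. Then for every integer Q with 0 ≤ Q ≤ K, one has (1 − (1+ε)/K)^{K−Q} · [ (1 − (1−ε)/K)^Q − (1 − (1+ε)/K)^Q ] ≥ 2 Q ε / (e^4 K). Equivalently, in the bandit instance whose weight vector w takes value (1+ε)/K on a K-element set A ⊆ [L] and value (1−ε)/K on [L] \ A, any ordered K-tuple S containing exactly Q items outside A satisfies r(A | w) − r(S | w) ≥ 2 Q ε / (e^4 K). -/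
open Finset Real

/-! With `a = (1-ε)/K` and `b = (1+ε)/K`, comparing with the geometric sum gives
`(1-a)^Q - (1-b)^Q ≥ Q (b-a) (1-b)^(Q-1)`, where `b - a = 2ε/K`; so the left-hand side is at least
`(2Qε/K) (1-b)^(K-1)`. Since `1 - b ≥ exp(-2b)` for `0 ≤ b ≤ 1/2` and `bK = 1 + ε ≤ 2`, we get
`(1-b)^(K-1) ≥ exp(-4)`. -/

theorem natCast_mul_sub_mul_pow_pred_le_pow_sub_pow {R : Type*} [CommRing R] [LinearOrder R]
    [IsStrictOrderedRing R] {x y : R} (hy : 0 ≤ y) (hyx : y ≤ x) (n : ℕ) :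
    n * (x - y) * y ^ (n - 1) ≤ x ^ n - y ^ n := by
  rw [← geom_sum₂_mul, mul_right_comm]
  refine mul_le_mul_of_nonneg_right ?_ (sub_nonneg.mpr hyx)
  calc (n : R) * y ^ (n - 1) = ∑ i ∈ range n, y ^ i * y ^ (n - 1 - i) := by
        rw [sum_congr rfl fun i hi => by
          rw [← pow_add, Nat.add_sub_cancel' (Nat.le_sub_one_of_lt (mem_range.mp hi))]]
        simp
    _ ≤ ∑ i ∈ range n, x ^ i * y ^ (n - 1 - i) := by
        gcongr

theorem Real.exp_neg_two_mul_le_one_sub {x : ℝ} (hx0 : 0 ≤ x) (hx : x ≤ 1 / 2) :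
    exp (-(2 * x)) ≤ 1 - x := by
  rw [exp_neg, inv_le_comm₀ (exp_pos _) (by linarith)]
  calc (1 - x)⁻¹ ≤ 1 + 2 * x := by
        rw [inv_le_iff_one_le_mul₀ (by linarith)]
        nlinarith
    _ ≤ exp (2 * x) := by linarith [add_one_le_exp (2 * x)]

theorem Real.exp_neg_two_mul_le_one_sub_pow {x : ℝ} (hx0 : 0 ≤ x) (hx : x ≤ 1 / 2) (n : ℕ) :
    exp (-(2 * (n * x))) ≤ (1 - x) ^ n := by
  rw [show -(2 * (n * x)) = n * -(2 * x) by ring, exp_nat_mul]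
  gcongr
  exact exp_neg_two_mul_le_one_sub hx0 hx

theorem stmt_10_general (K : ℕ) (ε : ℝ)
    (h1 : 0 < (1 - ε) / K) (h2 : (1 - ε) / K < (1 + ε) / K) (h3 : (1 + ε) / K < 1 / 4)
    (Q : ℕ) (hQ : Q ≤ K) :
    2 * Q * ε / (Real.exp 4 * K)
      ≤ (1 - (1 + ε) / K) ^ (K - Q) * ((1 - (1 - ε) / K) ^ Q - (1 - (1 + ε) / K) ^ Q) := by
  have hK : (0 : ℝ) < K := Nat.cast_pos.mpr (Nat.pos_of_ne_zero fun h => by simp [h] at h1)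
  have hε1 : ε < 1 := by linarith [(div_pos_iff_of_pos_right hK).mp h1]
  have hε0 : 0 ≤ ε := by linarith [(div_lt_div_iff_of_pos_right hK).mp h2]
  have hbK : (1 + ε) / K * K = 1 + ε := div_mul_cancel₀ _ hK.ne'
  have hba : (1 - (1 - ε) / K) - (1 - (1 + ε) / K) = 2 * ε / K := by ring
  set a := (1 - ε) / K
  set b := (1 + ε) / K
  have hb : 0 ≤ b := h1.le.trans h2.le
  rcases Nat.eq_zero_or_pos Q with rfl | hQ0
  · simp
  have hpow : (1 - b) ^ (K - Q) * (1 - b) ^ (Q - 1) = (1 - b) ^ (K - 1) := by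
    rw [← pow_add]; congr 1; omega
  have hexp : exp (-(2 * 2)) ≤ (1 - b) ^ (K - 1) := by
    refine (exp_le_exp.mpr ?_).trans (exp_neg_two_mul_le_one_sub_pow hb (by linarith) _)
    rw [Nat.cast_sub (by exact_mod_cast hK), Nat.cast_one]
    nlinarith
  calc 2 * Q * ε / (exp 4 * K) = Q * (2 * ε / K) * exp (-(2 * 2)) := by
        rw [exp_neg]; field_simp; norm_num
    _ ≤ Q * (2 * ε / K) * (1 - b) ^ (K - 1) := by gcongr
    _ = (1 - b) ^ (K - Q) * (Q * ((1 - a) - (1 - b)) * (1 - b) ^ (Q - 1)) := by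
        rw [← hpow, hba]; ring
    _ ≤ _ := by
        gcongr
        · exact pow_nonneg (by linarith) _
        · exact natCast_mul_sub_mul_pow_pred_le_pow_sub_pow (by linarith) (by linarith) Q

/-- For `ε ∈ [0,1]` and `K ≥ 1` with `0 < (1-ε)/K < (1+ε)/K < 1/4`, and any
integer `0 ≤ Q ≤ K`,
`(1 - (1+ε)/K)^{K-Q} ((1 - (1-ε)/K)^Q - (1 - (1+ε)/K)^Q) ≥ 2 Q ε / (e⁴ K)`;
this is the instantaneous regret lower bound for a list containing exactly `Q` suboptimal items
in the hard instances of the lower-bound proof. -/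
theorem stmt_10 (K : ℕ) (hK : 1 ≤ K) (ε : ℝ) (hε0 : 0 ≤ ε) (hε1 : ε ≤ 1)
    (h1 : 0 < (1 - ε) / K) (h2 : (1 - ε) / K < (1 + ε) / K) (h3 : (1 + ε) / K < 1 / 4)
    (Q : ℕ) (hQ : Q ≤ K) :
    2 * Q * ε / (Real.exp 4 * K)
      ≤ (1 - (1 + ε) / K) ^ (K - Q) * ((1 - (1 - ε) / K) ^ Q - (1 - (1 + ε) / K) ^ Q) :=
  stmt_10_general K ε h1 h2 h3 Q hQ
end

section
/- For every integer K ≥ 2 and every real ε with 0 ≤ ε ≤ 1/2, one has (1−ε) · log( (1−ε)/(1+ε) ) + (K−1+ε) · log( (K−1+ε)/(K−1−ε) ) ≤ 10 ε². (This makes precise the paper's claim that this quantity is O(ε²) for small ε.) -/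
/-!
Both logarithms are compared with their first-order behaviour. Since
`log ((1 + ε) / (1 - ε)) = 2 artanh ε ≥ 2ε`, the first term is at most `-2ε(1 - ε)`, and
`log x ≤ x - 1` bounds the second by its chi-square analogue `2ε + 4ε² / (K - 1 - ε)`.
The linear terms cancel, leaving `2ε² + 4ε² / (K - 1 - ε) ≤ 2ε² + 8ε²`.
-/

open Real

lemma mul_log_div_le_sub_add_sq_div {a b : ℝ} (ha : 0 < a) (hb : 0 < b) :
    a * log (a / b) ≤ a - b + (a - b) ^ 2 / b := by
  calc a * log (a / b) ≤ a * (a / b - 1) :=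
        mul_le_mul_of_nonneg_left (log_le_sub_one_of_pos (div_pos ha hb)) ha.le
    _ = a - b + (a - b) ^ 2 / b := by field_simp; ring

lemma two_mul_le_log_one_add_div_one_sub {x : ℝ} (h₀ : 0 ≤ x) (h₁ : x < 1) :
    2 * x ≤ log ((1 + x) / (1 - x)) := by
  have h := sum_range_le_log_div h₀ h₁ 1
  norm_num at h
  linarith

lemma one_sub_mul_log_div_one_add_le {ε : ℝ} (h₀ : 0 ≤ ε) (h₁ : ε < 1) :
    (1 - ε) * log ((1 - ε) / (1 + ε)) ≤ -2 * ε * (1 - ε) := by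
  rw [← inv_div, log_inv]
  nlinarith [two_mul_le_log_one_add_div_one_sub h₀ h₁]

/-- For every integer `K ≥ 2` and real `0 ≤ ε ≤ 1/2`,
`(1-ε) log((1-ε)/(1+ε)) + (K-1+ε) log((K-1+ε)/(K-1-ε)) ≤ 10 ε²`. -/
theorem stmt_13 (K : ℕ) (hK : 2 ≤ K) (ε : ℝ) (hε0 : 0 ≤ ε) (hε1 : ε ≤ 1 / 2) :
    (1 - ε) * Real.log ((1 - ε) / (1 + ε))
      + ((K : ℝ) - 1 + ε) * Real.log (((K : ℝ) - 1 + ε) / ((K : ℝ) - 1 - ε))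
      ≤ 10 * ε ^ 2 := by
  have hK' : (2 : ℝ) ≤ K := by exact_mod_cast hK
  have hden : (1 / 2 : ℝ) ≤ (K : ℝ) - 1 - ε := by linarith
  have hfirst := one_sub_mul_log_div_one_add_le hε0 (by linarith)
  have hsecond := mul_log_div_le_sub_add_sq_div (a := (K : ℝ) - 1 + ε) (by linarith)
    (by linarith : 0 < (K : ℝ) - 1 - ε)
  have hchi : ((K : ℝ) - 1 + ε - ((K : ℝ) - 1 - ε)) ^ 2 / ((K : ℝ) - 1 - ε) ≤ 8 * ε ^ 2 := by
    rw [div_le_iff₀ (by linarith)]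
    nlinarith [sq_nonneg ε]
  linarith
end

section
/- Let d ≥ 1 and T ≥ 2 be integers and let y_1, …, y_T ∈ ℝ^d satisfy ‖y_t‖ ≤ 1 for all t. Define the d×d matrices M_1 = I_d and M_{t+1} = M_t + y_t y_tᵀ for 1 ≤ t ≤ T (each M_t is symmetric positive definite, hence invertible). Then Σ_{t=1}^T √( y_tᵀ M_t^{−1} y_t ) ≤ 5 √( d T log T ). -/
/-!
With `M_t = I + ∑_{s<t} y_s y_sᵀ` and `x_t = y_tᵀ M_t⁻¹ y_t`, the matrix determinant lemma gives
`det M_{t+1} = det M_t (1 + x_t)`, so `∑ log (1 + x_t) = log det M_{T+1}`. Since `M_t ≥ I`, each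
`x_t ≤ ‖y_t‖² ≤ 1`, where `x ≤ 2 log (1 + x)`. Every eigenvalue of `M_{T+1}`, being a Rayleigh
quotient `1 + ∑ (y_s ⬝ v)²` with `‖v‖ = 1`, is at most `1 + T`, so
`log det M_{T+1} ≤ d log (1 + T) ≤ 2 d log T`. Hence `∑ x_t ≤ 4 d log T`, and Cauchy–Schwarz gives
`∑ √x_t ≤ √(T ∑ x_t) ≤ 2 √(d T log T)`.
-/

open Finset Matrix

theorem Real.le_two_mul_log_one_add {x : ℝ} (h0 : 0 ≤ x) (h2 : x ≤ 2) :
    x ≤ 2 * Real.log (1 + x) := by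
  have h := Real.le_log_one_add_of_nonneg h0
  rw [div_le_iff₀ (by linarith)] at h
  nlinarith

theorem Real.log_add_one_le_two_mul_log {x : ℝ} (hx : 2 ≤ x) :
    Real.log (x + 1) ≤ 2 * Real.log x := by
  rw [← Real.log_rpow (by linarith)]
  exact Real.log_le_log (by linarith) (by norm_num; nlinarith)

theorem Real.sum_sqrt_le_sqrt_card_mul_sum {ι : Type*} (s : Finset ι) {f : ι → ℝ}
    (hf : ∀ i ∈ s, 0 ≤ f i) : ∑ i ∈ s, √(f i) ≤ √(#s * ∑ i ∈ s, f i) := by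
  apply Real.le_sqrt_of_sq_le
  have h := sq_sum_le_card_mul_sum_sq (s := s) (f := fun i => √(f i))
  rwa [sum_congr rfl fun i hi => Real.sq_sqrt (hf i hi)] at h

namespace Matrix

variable {n : Type*}

section Fintype

variable [Fintype n]

theorem dotProduct_sq_le {R : Type*} [CommRing R] [LinearOrder R] [IsStrictOrderedRing R]
    (u v : n → R) : (u ⬝ᵥ v) ^ 2 ≤ (u ⬝ᵥ u) * (v ⬝ᵥ v) := by
  simpa only [dotProduct, sq] using sum_mul_sq_le_sq_mul_sq univ u v

theorem dotProduct_vecMulVec_self_mulVec {R : Type*} [CommSemiring R] (v x : n → R) :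
    x ⬝ᵥ vecMulVec v v *ᵥ x = (v ⬝ᵥ x) ^ 2 := by
  rw [vecMulVec_mulVec, op_smul_eq_smul, dotProduct_smul, smul_eq_mul, dotProduct_comm, sq]

theorem det_add_vecMulVec {R : Type*} [CommRing R] [DecidableEq n] {A : Matrix n n R}
    (hA : IsUnit A.det) (u v : n → R) :
    (A + vecMulVec u v).det = A.det * (1 + v ⬝ᵥ A⁻¹ *ᵥ u) := by
  rw [vecMulVec_eq Unit, det_add_replicateCol_mul_replicateRow hA, det_unique (1 + _),
    add_apply, one_apply_eq, ← replicateRow_vecMul, replicateRow_mul_replicateCol_apply,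
    dotProduct_mulVec]

theorem PosSemidef.det_le_pow [DecidableEq n] {A : Matrix n n ℝ} (hA : A.PosSemidef) {c : ℝ}
    (hc : ∀ v, v ⬝ᵥ A *ᵥ v ≤ c * (v ⬝ᵥ v)) : A.det ≤ c ^ Fintype.card n := by
  have hH := hA.isHermitian
  have heig : ∀ i, hH.eigenvalues i ≤ c := by
    intro i
    have hunit := real_inner_self_eq_norm_sq (hH.eigenvectorBasis i)
    rw [EuclideanSpace.inner_eq_star_dotProduct, hH.eigenvectorBasis.orthonormal.1 i] at hunit
    simp only [star_trivial, one_pow] at hunit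
    simpa [hH.eigenvalues_eq i, hunit] using hc (hH.eigenvectorBasis i)
  rw [hH.det_eq_prod_eigenvalues]
  refine (prod_le_prod (fun i _ => hA.eigenvalues_nonneg i) (fun i _ => heig i)).trans_eq ?_
  simp

theorem dotProduct_inv_mulVec_le [DecidableEq n] {A : Matrix n n ℝ} (hA : (A - 1).PosSemidef)
    (y : n → ℝ) : y ⬝ᵥ A⁻¹ *ᵥ y ≤ y ⬝ᵥ y := by
  have hpos : A.PosDef := by simpa using PosDef.one.add_posSemidef hA
  set z := A⁻¹ *ᵥ y
  have hAz : A *ᵥ z = y := by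
    rw [mulVec_mulVec, mul_nonsing_inv _ hpos.det_pos.ne'.isUnit, one_mulVec]
  have hzz : z ⬝ᵥ z ≤ y ⬝ᵥ z := by
    have h := hA.dotProduct_mulVec_nonneg z
    rw [star_trivial, sub_mulVec, one_mulVec, dotProduct_sub, hAz, dotProduct_comm z y] at h
    linarith
  have hyy : 0 ≤ y ⬝ᵥ y := by simpa using dotProduct_self_star_nonneg y
  -- `(y ⬝ᵥ z)² ≤ (y ⬝ᵥ y) (z ⬝ᵥ z) ≤ (y ⬝ᵥ y) (y ⬝ᵥ z)` by Cauchy–Schwarz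
  nlinarith [dotProduct_sq_le y z, mul_le_mul_of_nonneg_left hzz hyy]

end Fintype

section DesignMatrix

variable [DecidableEq n]

noncomputable def designMatrix (y : ℕ → n → ℝ) (t : ℕ) : Matrix n n ℝ :=
  1 + ∑ s ∈ Ico 1 t, vecMulVec (y s) (y s)

variable {y : ℕ → n → ℝ} {t : ℕ}

theorem designMatrix_succ (ht : 1 ≤ t) :
    designMatrix y (t + 1) = designMatrix y t + vecMulVec (y t) (y t) := by
  rw [designMatrix, designMatrix, sum_Ico_succ_top ht, add_assoc]

theorem eq_designMatrix_of_recursion {T : ℕ} {M : ℕ → Matrix n n ℝ} (hM1 : M 1 = 1)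
    (hMrec : ∀ t, 1 ≤ t → t ≤ T → M (t + 1) = M t + vecMulVec (y t) (y t))
    (ht : 1 ≤ t) (htT : t ≤ T + 1) : M t = designMatrix y t := by
  induction t, ht using Nat.le_induction with
  | base => simp [hM1, designMatrix]
  | succ t ht ih => rw [hMrec t ht (by omega), ih (by omega), designMatrix_succ ht]

variable [Fintype n]

theorem posSemidef_designMatrix_sub_one : (designMatrix y t - 1).PosSemidef := by
  rw [designMatrix, add_sub_cancel_left]
  exact posSemidef_sum _ fun s _ => by simpa using posSemidef_vecMulVec_self_star (y s)

theorem posDef_designMatrix : (designMatrix y t).PosDef := by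
  simpa using PosDef.one.add_posSemidef (posSemidef_designMatrix_sub_one (y := y) (t := t))

theorem det_designMatrix (ht : 1 ≤ t) :
    (designMatrix y t).det = ∏ s ∈ Ico 1 t, (1 + y s ⬝ᵥ (designMatrix y s)⁻¹ *ᵥ y s) := by
  induction t, ht using Nat.le_induction with
  | base => simp [designMatrix]
  | succ t ht ih =>
    rw [designMatrix_succ ht, det_add_vecMulVec posDef_designMatrix.det_pos.ne'.isUnit, ih,
      prod_Ico_succ_top ht]

theorem dotProduct_designMatrix_mulVec (v : n → ℝ) :
    v ⬝ᵥ designMatrix y t *ᵥ v = v ⬝ᵥ v + ∑ s ∈ Ico 1 t, (y s ⬝ᵥ v) ^ 2 := by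
  simp only [designMatrix, add_mulVec, one_mulVec, dotProduct_add, sum_mulVec, dotProduct_sum,
    dotProduct_vecMulVec_self_mulVec]

theorem det_designMatrix_le (hy : ∀ s ∈ Ico 1 t, y s ⬝ᵥ y s ≤ 1) (ht : 1 ≤ t) :
    (designMatrix y t).det ≤ (t : ℝ) ^ Fintype.card n := by
  refine posDef_designMatrix.posSemidef.det_le_pow fun v => ?_
  have hv : 0 ≤ v ⬝ᵥ v := by simpa using dotProduct_self_star_nonneg v
  calc v ⬝ᵥ designMatrix y t *ᵥ v
      ≤ v ⬝ᵥ v + ∑ _s ∈ Ico 1 t, v ⬝ᵥ v := by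
        rw [dotProduct_designMatrix_mulVec]
        gcongr with s hs
        exact (dotProduct_sq_le (y s) v).trans (mul_le_of_le_one_left hv (hy s hs))
    _ = t * (v ⬝ᵥ v) := by
        rw [sum_const, Nat.card_Ico, nsmul_eq_mul, Nat.cast_sub ht]
        ring

theorem sum_dotProduct_inv_designMatrix_mulVec_le_log_det (hy : ∀ s ∈ Ico 1 t, y s ⬝ᵥ y s ≤ 1)
    (ht : 1 ≤ t) :
    ∑ s ∈ Ico 1 t, y s ⬝ᵥ (designMatrix y s)⁻¹ *ᵥ y s ≤ 2 * Real.log (designMatrix y t).det := by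
  have hnonneg : ∀ s, 0 ≤ y s ⬝ᵥ (designMatrix y s)⁻¹ *ᵥ y s := fun s => by
    simpa using posDef_designMatrix.inv.posSemidef.dotProduct_mulVec_nonneg (y s)
  rw [det_designMatrix ht, Real.log_prod fun s _ => by linarith [hnonneg s], mul_sum]
  refine sum_le_sum fun s hs => Real.le_two_mul_log_one_add (hnonneg s) ?_
  linarith [dotProduct_inv_mulVec_le (posSemidef_designMatrix_sub_one (y := y) (t := s)) (y s),
    hy s hs]

theorem sum_dotProduct_inv_designMatrix_mulVec_le_log (hy : ∀ s ∈ Ico 1 t, y s ⬝ᵥ y s ≤ 1)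
    (ht : 1 ≤ t) :
    ∑ s ∈ Ico 1 t, y s ⬝ᵥ (designMatrix y s)⁻¹ *ᵥ y s ≤ 2 * Fintype.card n * Real.log t := by
  calc ∑ s ∈ Ico 1 t, y s ⬝ᵥ (designMatrix y s)⁻¹ *ᵥ y s
      ≤ 2 * Real.log (designMatrix y t).det :=
        sum_dotProduct_inv_designMatrix_mulVec_le_log_det hy ht
    _ ≤ 2 * Real.log ((t : ℝ) ^ Fintype.card n) := by
        gcongr
        exacts [posDef_designMatrix.det_pos, det_designMatrix_le hy ht]
    _ = 2 * Fintype.card n * Real.log t := by rw [Real.log_pow]; ring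

end DesignMatrix

end Matrix

theorem stmt_15_general (d T : ℕ) (hT : 2 ≤ T)
    (y : ℕ → Fin d → ℝ) (hy : ∀ t, 1 ≤ t → t ≤ T → Real.sqrt (∑ i, y t i ^ 2) ≤ 1)
    (M : ℕ → Matrix (Fin d) (Fin d) ℝ) (hM1 : M 1 = 1)
    (hMrec : ∀ t, 1 ≤ t → t ≤ T → M (t + 1) = M t + Matrix.vecMulVec (y t) (y t)) :
    ∑ t ∈ Finset.Icc 1 T, Real.sqrt (dotProduct (y t) ((M t)⁻¹.mulVec (y t)))
      ≤ 5 * Real.sqrt (d * T * Real.log T) := by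
  have hyy : ∀ t ∈ Ico 1 (T + 1), y t ⬝ᵥ y t ≤ 1 := fun t ht => by
    obtain ⟨h1, h2⟩ := mem_Ico.1 ht
    simpa [dotProduct, sq] using hy t h1 (by omega)
  have hM : ∀ t ∈ Ico 1 (T + 1), M t = designMatrix y t := fun t ht =>
    eq_designMatrix_of_recursion hM1 hMrec (mem_Ico.1 ht).1 (mem_Ico.1 ht).2.le
  have hlog := Real.log_add_one_le_two_mul_log (x := T) (by exact_mod_cast hT)
  have hsum := sum_dotProduct_inv_designMatrix_mulVec_le_log hyy (by omega : 1 ≤ T + 1)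
  push_cast [Fintype.card_fin] at hsum
  rw [← Ico_add_one_right_eq_Icc, sum_congr rfl fun t ht => by rw [hM t ht]]
  calc ∑ t ∈ Ico 1 (T + 1), √(y t ⬝ᵥ (designMatrix y t)⁻¹ *ᵥ y t)
      ≤ √(#(Ico 1 (T + 1)) * ∑ t ∈ Ico 1 (T + 1), y t ⬝ᵥ (designMatrix y t)⁻¹ *ᵥ y t) :=
        Real.sum_sqrt_le_sqrt_card_mul_sum _ fun t _ => by
          simpa using posDef_designMatrix.inv.posSemidef.dotProduct_mulVec_nonneg (y t)
    _ ≤ √(2 ^ 2 * (d * T * Real.log T)) := Real.sqrt_le_sqrt <| by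
        rw [Nat.card_Ico, Nat.add_sub_cancel]
        nlinarith [mul_le_mul_of_nonneg_left hsum (Nat.cast_nonneg T),
          mul_le_mul_of_nonneg_left hlog (by positivity : (0 : ℝ) ≤ 2 * d * T)]
    _ ≤ 5 * √(d * T * Real.log T) := by
        rw [Real.sqrt_mul (by norm_num), Real.sqrt_sq (by norm_num)]
        gcongr
        norm_num

/-- Elliptical potential bound. If `‖y_t‖ ≤ 1` for `1 ≤ t ≤ T`, `M_1 = I_d` and
`M_{t+1} = M_t + y_t y_tᵀ`, then `∑_{t=1}^T √(y_tᵀ M_t⁻¹ y_t) ≤ 5 √(d T log T)`. -/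
theorem stmt_15 (d T : ℕ) (hd : 1 ≤ d) (hT : 2 ≤ T)
    (y : ℕ → Fin d → ℝ) (hy : ∀ t, 1 ≤ t → t ≤ T → Real.sqrt (∑ i, y t i ^ 2) ≤ 1)
    (M : ℕ → Matrix (Fin d) (Fin d) ℝ) (hM1 : M 1 = 1)
    (hMrec : ∀ t, 1 ≤ t → t ≤ T → M (t + 1) = M t + Matrix.vecMulVec (y t) (y t)) :
    ∑ t ∈ Finset.Icc 1 T, Real.sqrt (dotProduct (y t) ((M t)⁻¹.mulVec (y t)))
      ≤ 5 * Real.sqrt (d * T * Real.log T) :=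
  stmt_15_general d T hT y hy M hM1 hMrec
end

section
/- Let N ∈ ℕ, let t ≥ 1 be an integer, let m ∈ [0, 1], and let Y_1, …, Y_N be independent Bernoulli random variables with common mean m. Let ξ̂ = (1/N) Σ_{i=1}^N Y_i be the sample mean (with the convention ξ̂ = 0 if N = 0) and V̂ = ξ̂ (1 − ξ̂) the empirical variance. Then the probability that |ξ̂ − m| > √( 16 V̂ log(t+1) / (N+1) ) + 24 log(t+1) / (N+1) is at most 3 / (t+1)^4. -/
open MeasureTheory

open Real ProbabilityTheory

/-- The Bernoulli law with mean `m` as a measure on `ℝ`: value `1` with probability `m`,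
value `0` with probability `1 - m`. -/
noncomputable def bernoulliReal (m : ℝ) : Measure ℝ :=
  ENNReal.ofReal m • Measure.dirac (1 : ℝ) + ENNReal.ofReal (1 - m) • Measure.dirac (0 : ℝ)


lemma g_nonneg {l : ℝ} (h0 : 0 ≤ l) :
    0 ≤ l^2/2 - (Real.exp l - 1 - l)*(1 - l/3) := by
  set g1 : ℝ → ℝ := fun x => x - (Real.exp x - 1)*(1 - x/3) + (Real.exp x - 1 - x)/3 with hg1
  have hd1 : ∀ x, HasDerivAt g1 ((1 - Real.exp x * (1 - x))/3) x := by
    intro x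
    have h := (((Real.hasDerivAt_exp x).sub_const 1).mul ((hasDerivAt_id x).div_const 3 |>.const_sub 1))
    have h2 := (hasDerivAt_id x).sub h |>.add ((((Real.hasDerivAt_exp x).sub_const 1).sub (hasDerivAt_id x)).div_const 3)
    refine h2.congr_deriv ?_
    simp only [id_eq]
    ring
  have hg1mono : MonotoneOn g1 (Set.Ici 0) := by
    apply monotoneOn_of_deriv_nonneg (convex_Ici 0)
    · exact (Continuous.continuousOn (by continuity))
    · intro x hx
      exact (hd1 x).differentiableAt.differentiableWithinAt
    · intro x hx
      rw [(hd1 x).deriv]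
      have h1 : 1 - x ≤ Real.exp (-x) := by linarith [Real.add_one_le_exp (-x)]
      have h2 : Real.exp x * (1 - x) ≤ Real.exp x * Real.exp (-x) :=
        mul_le_mul_of_nonneg_left h1 (Real.exp_pos x).le
      rw [← Real.exp_add] at h2
      simp at h2
      linarith
  have hg10 : g1 0 = 0 := by simp [hg1]
  have hg1nonneg : ∀ x ∈ Set.Ici (0:ℝ), 0 ≤ g1 x := by
    intro x hx
    have := hg1mono (Set.self_mem_Ici) hx (by exact hx)
    simpa [hg10] using this
  set g : ℝ → ℝ := fun x => x^2/2 - (Real.exp x - 1 - x)*(1 - x/3) with hg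
  have hdg : ∀ x, HasDerivAt g (g1 x) x := by
    intro x
    have h := (((hasDerivAt_id x).pow 2).div_const 2).sub
      ((((Real.hasDerivAt_exp x).sub_const 1).sub (hasDerivAt_id x)).mul ((hasDerivAt_id x).div_const 3 |>.const_sub 1))
    refine h.congr_deriv ?_
    simp only [hg1, id_eq, Pi.sub_apply]
    ring
  have hgmono : MonotoneOn g (Set.Ici 0) := by
    apply monotoneOn_of_deriv_nonneg (convex_Ici 0)
    · exact (Continuous.continuousOn (by continuity))
    · intro x hx; exact (hdg x).differentiableAt.differentiableWithinAt
    · intro x hx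
      rw [(hdg x).deriv]
      exact hg1nonneg x (le_of_lt (by simpa using hx))
  have hg0 : g 0 = 0 := by simp [hg]
  have h2 : g 0 ≤ g l := hgmono Set.self_mem_Ici h0 h0
  rw [hg0] at h2
  simpa [hg] using h2

lemma exp_taylor_bound {l : ℝ} (h0 : 0 ≤ l) (h3 : l < 3) :
    Real.exp l - 1 - l ≤ l^2 / (2*(1 - l/3)) := by
  have h3' : (0:ℝ) < 2*(1 - l/3) := by linarith
  have h := g_nonneg h0
  rw [le_div_iff₀ h3']
  nlinarith


lemma bennett_bernoulli {m l : ℝ} (hm0 : 0 ≤ m) (hm1 : m ≤ 1) (h0 : 0 ≤ l) :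
    1 - m + m * Real.exp l ≤ Real.exp (m*l + m*(1-m)*(Real.exp l - 1 - l)) := by
  have hDpos : ∀ x : ℝ, 0 < 1 - m + m * Real.exp x := by
    intro x
    rcases eq_or_lt_of_le hm0 with h | h
    · simp [← h]
    · have := mul_pos h (Real.exp_pos x)
      nlinarith
  set v := m*(1-m) with hv
  have hvnn : 0 ≤ v := mul_nonneg hm0 (by linarith)
  set f1 : ℝ → ℝ := fun x => m + v*(Real.exp x - 1) - m*Real.exp x/(1 - m + m*Real.exp x) with hf1def
  have hD : ∀ x : ℝ, HasDerivAt (fun y => 1 - m + m*Real.exp y) (m*Real.exp x) x := by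
    intro x
    exact ((Real.hasDerivAt_exp x).const_mul m).const_add (1-m)
  have hd1 : ∀ x, HasDerivAt f1 (v*Real.exp x - v*Real.exp x/(1 - m + m*Real.exp x)^2) x := by
    intro x
    have hq := (((Real.hasDerivAt_exp x).const_mul m).div (hD x) (hDpos x).ne')
    have h := ((((Real.hasDerivAt_exp x).sub_const 1).const_mul v).const_add m).sub hq
    refine h.congr_deriv ?_
    have hne := (hDpos x).ne'
    field_simp
    ring
  have hcont1 : Continuous f1 := by
    apply Continuous.sub (by continuity)
    exact (continuous_const.mul continuous_exp).div (by continuity) (fun x => (hDpos x).ne')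
  have hf1mono : MonotoneOn f1 (Set.Ici 0) := by
    apply monotoneOn_of_deriv_nonneg (convex_Ici 0) hcont1.continuousOn
    · intro x hx; exact (hd1 x).differentiableAt.differentiableWithinAt
    · intro x hx
      rw [(hd1 x).deriv]
      have hx0 : (0:ℝ) < x := by simpa using hx
      have hD1 : 1 ≤ (1 - m + m*Real.exp x)^2 := by
        have h1 : 1 ≤ Real.exp x := by simpa using Real.exp_le_exp.mpr hx0.le
        have h2 : 1 ≤ 1 - m + m*Real.exp x := by nlinarith
        nlinarith
      have := div_le_self (by positivity : (0:ℝ) ≤ v*Real.exp x) hD1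
      linarith
  have hf10 : f1 0 = 0 := by simp [hf1def]
  have hf1nonneg : ∀ x ∈ Set.Ici (0:ℝ), 0 ≤ f1 x := by
    intro x hx
    have := hf1mono Set.self_mem_Ici hx (by exact hx)
    simpa [hf10] using this
  set f : ℝ → ℝ := fun x => m*x + v*(Real.exp x - 1 - x) - Real.log (1 - m + m*Real.exp x) with hfdef
  have hdf : ∀ x, HasDerivAt f (f1 x) x := by
    intro x
    have hlog := (hD x).log (hDpos x).ne'
    have h := (((hasDerivAt_id x).const_mul m).add
      ((((Real.hasDerivAt_exp x).sub_const 1).sub (hasDerivAt_id x)).const_mul v)).sub hlog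
    refine h.congr_deriv ?_
    simp only [hf1def, id_eq]
    ring
  have hfmono : MonotoneOn f (Set.Ici 0) := by
    apply monotoneOn_of_deriv_nonneg (convex_Ici 0)
    · apply Continuous.continuousOn
      apply Continuous.sub (by continuity)
      refine continuous_iff_continuousAt.mpr (fun x => ?_)
      exact (hD x).continuousAt.log (hDpos x).ne'
    · intro x hx; exact (hdf x).differentiableAt.differentiableWithinAt
    · intro x hx
      rw [(hdf x).deriv]
      exact hf1nonneg x (le_of_lt (by simpa using hx))
  have hf0 : f 0 = 0 := by simp [hfdef]
  have h2 : f 0 ≤ f l := hfmono Set.self_mem_Ici h0 h0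
  rw [hf0] at h2
  have hlogle : Real.log (1 - m + m*Real.exp l) ≤ m*l + v*(Real.exp l - 1 - l) := by
    simpa [hfdef] using h2
  calc 1 - m + m*Real.exp l = Real.exp (Real.log (1 - m + m*Real.exp l)) :=
        (Real.exp_log (hDpos l)).symm
    _ ≤ _ := Real.exp_le_exp.mpr hlogle

lemma integrable_dirac_real {f : ℝ → ℝ} (a : ℝ) : Integrable f (Measure.dirac a) :=
  (integrable_const (f a)).congr (MeasureTheory.ae_eq_dirac f).symm

lemma integral_bernoulliReal {m : ℝ} (hm0 : 0 ≤ m) (hm1 : m ≤ 1) (f : ℝ → ℝ) :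
    ∫ x, f x ∂(bernoulliReal m) = m * f 1 + (1 - m) * f 0 := by
  rw [bernoulliReal, integral_add_measure, integral_smul_measure, integral_smul_measure,
    integral_dirac, integral_dirac]
  · rw [ENNReal.toReal_ofReal hm0, ENNReal.toReal_ofReal (by linarith)]
    simp [smul_eq_mul]
  · exact (integrable_dirac_real 1).smul_measure ENNReal.ofReal_ne_top
  · exact (integrable_dirac_real 0).smul_measure ENNReal.ofReal_ne_top

lemma bern_ae {Ω : Type*} [MeasurableSpace Ω] (μ : Measure Ω) {m : ℝ} {X : Ω → ℝ}
    (hX : Measurable X) (hlaw : μ.map X = bernoulliReal m) :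
    ∀ᵐ ω ∂μ, X ω = 0 ∨ X ω = 1 := by
  have hset : MeasurableSet ({0, 1} : Set ℝ) :=
    (measurableSet_singleton 1).insert 0
  have h0 : μ (X ⁻¹' ({0, 1} : Set ℝ)ᶜ) = 0 := by
    rw [← Measure.map_apply hX hset.compl, hlaw]
    have h1 : (1:ℝ) ∈ ({0,1} : Set ℝ) := by simp
    have h2 : (0:ℝ) ∈ ({0,1} : Set ℝ) := by simp
    simp [bernoulliReal, Measure.dirac_apply' _ hset.compl, h1, h2]
  refine (measure_eq_zero_iff_ae_notMem.mp h0).mono (fun ω h => ?_)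
  by_cases h1 : X ω = 0
  · exact Or.inl h1
  · right
    simpa [Set.mem_preimage, h1] using h

lemma tail_bound {Ω : Type*} [MeasurableSpace Ω] (μ : Measure Ω) [IsProbabilityMeasure μ]
    (N : ℕ) (m : ℝ) (hm0 : 0 ≤ m) (hm1 : m ≤ 1)
    (Y : Fin N → Ω → ℝ) (hmeas : ∀ i, Measurable (Y i))
    (hindep : ProbabilityTheory.iIndepFun Y μ)
    (hlaw : ∀ i, μ.map (Y i) = bernoulliReal m)
    (L ε : ℝ) (hL : 0 < L) (hε : 0 < ε) (hv : 0 < m*(1-m))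
    (hNε : 8*L*(m*(1-m)) + (8/3)*L*ε ≤ N*ε^2) :
    μ {ω | N*m + N*ε ≤ ∑ i, Y i ω} ≤ ENNReal.ofReal (Real.exp (-(4*L))) := by
  set v := m*(1-m) with hvdef
  set w := v + ε/3 with hwdef
  have hw : 0 < w := by positivity
  set l := ε/w with hldef
  have hl0 : 0 < l := div_pos hε hw
  have hl3 : l < 3 := by
    rw [hldef, div_lt_iff₀ hw, hwdef]
    linarith
  -- almost sure boundedness of the sum
  have haeS : ∀ᵐ ω ∂μ, 0 ≤ ∑ i, Y i ω ∧ (∑ i, Y i ω) ≤ N := by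
    have h := MeasureTheory.ae_all_iff.mpr (fun i => bern_ae μ (hmeas i) (hlaw i))
    refine h.mono (fun ω hω => ?_)
    constructor
    · exact Finset.sum_nonneg (fun i _ => by rcases hω i with h | h <;> simp [h])
    · calc (∑ i, Y i ω) ≤ ∑ _i : Fin N, (1:ℝ) :=
            Finset.sum_le_sum (fun i _ => by rcases hω i with h | h <;> simp [h])
      _ = N := by simp
  have hmeasS : Measurable (fun ω => ∑ i, Y i ω) :=
    Finset.measurable_sum Finset.univ (fun i _ => hmeas i)
  have hint : Integrable (fun ω => Real.exp (l * (∑ i, Y i ω))) μ := by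
    refine Integrable.mono' (integrable_const (Real.exp (l * N)))
      ((hmeasS.const_mul l).exp.aestronglyMeasurable) ?_
    refine haeS.mono (fun ω hω => ?_)
    rw [Real.norm_eq_abs, abs_of_pos (Real.exp_pos _), Real.exp_le_exp]
    exact mul_le_mul_of_nonneg_left hω.2 hl0.le
  -- Chernoff
  have hch := ProbabilityTheory.measure_ge_le_exp_mul_mgf (μ := μ)
    (X := fun ω => ∑ i, Y i ω) (N*m + N*ε) hl0.le hint
  -- mgf of the sum
  have hsum_eq : (fun ω => ∑ i, Y i ω) = ∑ i, Y i := by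
    funext ω; simp
  have hmgf_i : ∀ i, mgf (Y i) μ l = m * Real.exp l + (1-m) := by
    intro i
    have hmap := integral_map (φ := Y i) (μ := μ) (f := fun x => Real.exp (l * x))
      (hmeas i).aemeasurable ((measurable_id.const_mul l).exp).aestronglyMeasurable
    rw [mgf, ← hmap, hlaw i, integral_bernoulliReal hm0 hm1]
    simp
  have hmgf : mgf (fun ω => ∑ i, Y i ω) μ l = (m * Real.exp l + (1-m))^N := by
    rw [hsum_eq, hindep.mgf_sum hmeas]
    simp [hmgf_i]
  rw [hmgf] at hch
  -- bound the rhs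
  have hbern : (m * Real.exp l + (1-m))^N ≤ Real.exp ((N:ℝ) * (m*l + v*(Real.exp l - 1 - l))) := by
    have h1 : m * Real.exp l + (1-m) ≤ Real.exp (m*l + v*(Real.exp l - 1 - l)) := by
      have := bennett_bernoulli hm0 hm1 hl0.le
      linarith
    calc (m * Real.exp l + (1-m))^N ≤ (Real.exp (m*l + v*(Real.exp l - 1 - l)))^N := by
          apply pow_le_pow_left₀ (by nlinarith [Real.exp_pos l]) h1
      _ = Real.exp ((N:ℝ) * (m*l + v*(Real.exp l - 1 - l))) := by
          rw [← Real.exp_nat_mul]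
  have hexp_bound : Real.exp (-l * (N*m + N*ε)) * (m * Real.exp l + (1-m))^N
      ≤ Real.exp (-(4*L)) := by
    have h2 : Real.exp (-l * (N*m + N*ε)) * (m * Real.exp l + (1-m))^N
        ≤ Real.exp (-l * (N*m + N*ε) + (N:ℝ) * (m*l + v*(Real.exp l - 1 - l))) := by
      rw [Real.exp_add]
      exact mul_le_mul_of_nonneg_left hbern (Real.exp_pos _).le
    refine h2.trans (Real.exp_le_exp.mpr ?_)
    -- the exponent: N*(-l*ε + v*(exp l - 1 - l)) ≤ -4L
    have htay : Real.exp l - 1 - l ≤ l^2/(2*(1-l/3)) := exp_taylor_bound hl0.le hl3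
    have h1l3 : 1 - l/3 = v/w := by
      rw [hldef]
      field_simp
      rw [hwdef]
      ring
    have hvl : v * (l^2/(2*(1-l/3))) = ε^2/(2*w) := by
      rw [h1l3, hldef]
      field_simp
    have hlε : l * ε = ε^2/w := by rw [hldef]; field_simp
    have hvg : v * (Real.exp l - 1 - l) ≤ ε^2/(2*w) := by
      rw [← hvl]
      exact mul_le_mul_of_nonneg_left htay hv.le
    have hfinal : (N:ℝ) * (ε^2/(2*w)) - (N:ℝ) * (ε^2/w) ≤ -(4*L) := by
      have h8 : 8*L*w ≤ (N:ℝ)*ε^2 := by rw [hwdef]; linarith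
      have : (N:ℝ) * (ε^2/(2*w)) - (N:ℝ) * (ε^2/w) = -((N:ℝ)*ε^2/(2*w)) := by
        field_simp; ring
      rw [this, neg_le_neg_iff, le_div_iff₀ (by positivity)]
      linarith
    have hNnn : (0:ℝ) ≤ (N:ℝ) := Nat.cast_nonneg N
    calc -l * (N*m + N*ε) + (N:ℝ) * (m*l + v*(Real.exp l - 1 - l))
        = (N:ℝ) * (v*(Real.exp l - 1 - l)) - (N:ℝ)*(l*ε) := by ring
      _ ≤ (N:ℝ) * (ε^2/(2*w)) - (N:ℝ)*(ε^2/w) := by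
          rw [hlε]
          exact sub_le_sub_right (mul_le_mul_of_nonneg_left hvg hNnn) _
      _ ≤ -(4*L) := hfinal
  rw [ENNReal.le_ofReal_iff_toReal_le (measure_ne_top μ _) (Real.exp_pos _).le]
  exact hch.trans hexp_bound


lemma sqrt_add_le' {a b : ℝ} (ha : 0 ≤ a) (hb : 0 ≤ b) :
    Real.sqrt (a + b) ≤ Real.sqrt a + Real.sqrt b := by
  have h : a + b ≤ (Real.sqrt a + Real.sqrt b)^2 := by
    have h1 := Real.sq_sqrt ha
    have h2 := Real.sq_sqrt hb
    nlinarith [Real.sqrt_nonneg a, Real.sqrt_nonneg b,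
      mul_nonneg (Real.sqrt_nonneg a) (Real.sqrt_nonneg b)]
  calc Real.sqrt (a + b) ≤ Real.sqrt ((Real.sqrt a + Real.sqrt b)^2) := Real.sqrt_le_sqrt h
    _ = _ := Real.sqrt_sq (by positivity)

lemma sqrt_le_scale {x y c : ℝ} (hc : 0 ≤ c) (h : x ≤ c^2 * y) :
    Real.sqrt x ≤ c * Real.sqrt y := by
  calc Real.sqrt x ≤ Real.sqrt (c^2 * y) := Real.sqrt_le_sqrt h
    _ = Real.sqrt (c^2) * Real.sqrt y := Real.sqrt_mul (sq_nonneg c) y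
    _ = c * Real.sqrt y := by rw [Real.sqrt_sq hc]

lemma sqrt_sq_mul_eq {c y : ℝ} (hc : 0 ≤ c) : Real.sqrt (c^2 * y) = c * Real.sqrt y := by
  rw [Real.sqrt_mul (sq_nonneg c), Real.sqrt_sq hc]

lemma sqrt_amgm {p q : ℝ} (hp : 0 ≤ p) (hq : 0 ≤ q) :
    Real.sqrt (p * q) ≤ (p + q)/2 := by
  have h : p * q ≤ ((p + q)/2)^2 := by nlinarith [sq_nonneg (p - q)]
  calc Real.sqrt (p*q) ≤ Real.sqrt (((p+q)/2)^2) := Real.sqrt_le_sqrt h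
    _ = (p+q)/2 := Real.sqrt_sq (by positivity)

set_option maxHeartbeats 1000000 in
lemma det_lemma (N : ℕ) (hN : 16 ≤ N) (L x m : ℝ) (hL : 0 < L)
    (hx0 : 0 ≤ x) (hx1 : x ≤ 1) (hm0 : 0 ≤ m) (hm1 : m ≤ 1)
    (hup : x - m < Real.sqrt (8*(m*(1-m))*L/N) + (8/3)*L/N)
    (hdn : m - x < Real.sqrt (8*(m*(1-m))*L/N) + (8/3)*L/N) :
    |x - m| ≤ Real.sqrt (16*(x*(1-x))*L/((N:ℝ)+1)) + 24*L/((N:ℝ)+1) := by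
  have h16 : (16:ℝ) ≤ (N:ℝ) := by exact_mod_cast hN
  have hN0 : (0:ℝ) < (N:ℝ) := by linarith
  have hN10 : (0:ℝ) < (N:ℝ)+1 := by linarith
  obtain ⟨u, hudef⟩ : ∃ u : ℝ, u = L/((N:ℝ)+1) := ⟨_, rfl⟩
  obtain ⟨v, hvdef⟩ : ∃ v : ℝ, v = m*(1-m) := ⟨_, rfl⟩
  obtain ⟨V, hVdef⟩ : ∃ V : ℝ, V = x*(1-x) := ⟨_, rfl⟩
  obtain ⟨d, hddef⟩ : ∃ d : ℝ, d = |x - m| := ⟨_, rfl⟩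
  have hu0 : 0 < u := by rw [hudef]; positivity
  have hv0 : 0 ≤ v := by rw [hvdef]; nlinarith
  have hV0 : 0 ≤ V := by rw [hVdef]; nlinarith
  have hd0 : 0 ≤ d := hddef ▸ abs_nonneg _
  have hLN16 : 16*(L/(N:ℝ)) ≤ 17*u := by
    rw [hudef, ← mul_div_assoc, ← mul_div_assoc, div_le_div_iff₀ hN0 hN10]
    nlinarith [mul_nonneg hL.le (show (0:ℝ) ≤ (N:ℝ)-16 by linarith)]
  -- the hypothesis in scaled form
  have hsq1 : Real.sqrt (8*(m*(1-m))*L/(N:ℝ)) ≤ (73/25) * Real.sqrt (u*v) := by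
    apply sqrt_le_scale (by norm_num)
    have h1 : 8*(m*(1-m))*L/(N:ℝ) = (8*v) * (L/(N:ℝ)) := by rw [hvdef]; ring
    rw [h1]
    nlinarith [mul_le_mul_of_nonneg_left hLN16 (show (0:ℝ) ≤ v/2 by linarith),
      mul_nonneg hu0.le hv0]
  have h83 : (8/3)*L/(N:ℝ) ≤ (17/6)*u := by
    have e : (8/3)*L/(N:ℝ) = (1/6)*(16*(L/(N:ℝ))) := by ring
    rw [e]
    linarith
  have hdlt : d < (73/25) * Real.sqrt (u*v) + (17/6)*u := by
    have := abs_sub_lt_iff.mpr ⟨hup, hdn⟩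
    rw [← hddef] at this
    linarith
  -- goal reduction
  have hgoal_eq : Real.sqrt (16*(x*(1-x))*L/((N:ℝ)+1)) = 4 * Real.sqrt (u*V) := by
    rw [show 16*(x*(1-x))*L/((N:ℝ)+1) = 4^2*(u*V) by rw [hudef, hVdef]; ring]
    exact sqrt_sq_mul_eq (by norm_num)
  have hgoal_u : 24*L/((N:ℝ)+1) = 24*u := by rw [hudef]; ring
  rw [← hddef, hgoal_eq, hgoal_u]
  have hCnn : 0 ≤ Real.sqrt (u*V) := Real.sqrt_nonneg _
  rcases le_or_gt v d with hcase | hcase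
  · -- small variance case: d ≤ 24u suffices
    have hAB : Real.sqrt (u*v) ≤ Real.sqrt (u*d) :=
      Real.sqrt_le_sqrt (by nlinarith)
    have hB2 : (Real.sqrt (u*d))^2 = u*d := Real.sq_sqrt (by positivity)
    have hBnn := Real.sqrt_nonneg (u*d)
    have hd24 : d ≤ 24*u := by
      by_contra hcon
      push_neg at hcon
      have h3 : 0 ≤ d - (17/6)*u := by linarith
      have h4 : (d - (17/6)*u)^2 ≤ ((73/25) * Real.sqrt (u*d))^2 := by
        apply pow_le_pow_left₀ h3 (by linarith) 2
      rw [mul_pow, hB2] at h4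
      nlinarith [mul_nonneg hd0 (show (0:ℝ) ≤ d - 24*u by linarith)]
    linarith
  · -- main case: d < v
    have hVv : v - d ≤ V := by
      have h2 : |1 - m - x| ≤ 1 := abs_le.mpr ⟨by linarith, by linarith⟩
      have h3 : (m - x)*(1 - m - x) ≤ d := by
        calc (m-x)*(1-m-x) ≤ |(m-x)*(1-m-x)| := le_abs_self _
          _ = |m-x| * |1-m-x| := abs_mul _ _
          _ ≤ |m-x| * 1 := by
              exact mul_le_mul_of_nonneg_left h2 (abs_nonneg _)
          _ = d := by rw [mul_one, hddef, abs_sub_comm]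
      have h4 : v - V = (m-x)*(1-m-x) := by rw [hvdef, hVdef]; ring
      linarith
    have hABC : Real.sqrt (u*v) - Real.sqrt (u*d) ≤ Real.sqrt (u*V) := by
      have h5 : Real.sqrt (u*v) ≤ Real.sqrt (u*(v-d)) + Real.sqrt (u*d) := by
        rw [show u*v = u*(v-d) + u*d by ring]
        exact sqrt_add_le' (by nlinarith) (by positivity)
      have h6 : Real.sqrt (u*(v-d)) ≤ Real.sqrt (u*V) :=
        Real.sqrt_le_sqrt (by nlinarith)
      linarith
    have hBbound : Real.sqrt (u*d) ≤ (171/100) * Real.sqrt (u * Real.sqrt (u*v)) + (169/100)*u := by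
      have h7 : u*d ≤ (73/25)*(u*Real.sqrt (u*v)) + (17/6)*u^2 := by
        nlinarith [hdlt, hu0.le]
      calc Real.sqrt (u*d)
          ≤ Real.sqrt ((73/25)*(u*Real.sqrt (u*v)) + (17/6)*u^2) := Real.sqrt_le_sqrt h7
        _ ≤ Real.sqrt ((73/25)*(u*Real.sqrt (u*v))) + Real.sqrt ((17/6)*u^2) := by
            apply sqrt_add_le' (by positivity) (by positivity)
        _ ≤ (171/100) * Real.sqrt (u * Real.sqrt (u*v)) + (169/100)*u := by
            have h8 : Real.sqrt ((73/25)*(u*Real.sqrt (u*v)))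
                ≤ (171/100) * Real.sqrt (u*Real.sqrt (u*v)) := by
              apply sqrt_le_scale (by norm_num)
              nlinarith [mul_nonneg hu0.le (Real.sqrt_nonneg (u*v))]
            have h9 : Real.sqrt ((17/6)*u^2) ≤ (169/100)*u := by
              have := sqrt_le_scale (x := (17/6)*u^2) (y := u^2) (c := 169/100)
                (by norm_num) (by nlinarith)
              rw [Real.sqrt_sq hu0.le] at this
              exact this
            linarith
    have hAmgm : Real.sqrt (u * Real.sqrt (u*v)) ≤ (3/20) * Real.sqrt (u*v) + (5/3)*u := by
      have h10 : u * Real.sqrt (u*v) = ((3/10)*Real.sqrt (u*v)) * ((10/3)*u) := by ring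
      rw [h10]
      calc Real.sqrt (((3/10)*Real.sqrt (u*v)) * ((10/3)*u))
          ≤ (((3/10)*Real.sqrt (u*v)) + ((10/3)*u))/2 :=
            sqrt_amgm (by positivity) (by positivity)
        _ = (3/20) * Real.sqrt (u*v) + (5/3)*u := by ring
    have hAnn := Real.sqrt_nonneg (u*v)
    linarith

lemma bern_ae_const {Ω : Type*} [MeasurableSpace Ω] (μ : Measure Ω) {m : ℝ} {X : Ω → ℝ}
    (hX : Measurable X) (hlaw : μ.map X = bernoulliReal m) (hm : m * (1-m) = 0) :
    ∀ᵐ ω ∂μ, X ω = m := by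
  have h0 : μ (X ⁻¹' ({m} : Set ℝ)ᶜ) = 0 := by
    rw [← Measure.map_apply hX (measurableSet_singleton m).compl, hlaw]
    rcases mul_eq_zero.mp hm with h | h
    · simp [bernoulliReal, h, Measure.dirac_apply' _ (measurableSet_singleton (0:ℝ)).compl]
    · have hm1 : m = 1 := by linarith
      simp [bernoulliReal, hm1, Measure.dirac_apply' _ (measurableSet_singleton (1:ℝ)).compl]
  refine (measure_eq_zero_iff_ae_notMem.mp h0).mono (fun ω h => ?_)
  simpa using h

lemma map_one_sub_bern {m : ℝ} : (bernoulliReal m).map (fun x => 1 - x) = bernoulliReal (1-m) := by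
  have hmeas : Measurable (fun x : ℝ => 1 - x) := measurable_const.sub measurable_id
  rw [bernoulliReal, Measure.map_add _ _ hmeas, Measure.map_smul, Measure.map_smul,
    Measure.map_dirac' hmeas, Measure.map_dirac' hmeas, bernoulliReal]
  norm_num [add_comm]

/-- Empirical-Bernstein concentration for `N` i.i.d. Bernoulli(`m`) variables:
with `ξ̂` the sample mean (`0` if `N = 0`, via division-by-zero convention) and
`V̂ = ξ̂ (1 - ξ̂)`, the probability that
`|ξ̂ - m| > √(16 V̂ log(t+1)/(N+1)) + 24 log(t+1)/(N+1)` is at most `3/(t+1)⁴`. -/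
theorem stmt_17 {Ω : Type*} [MeasurableSpace Ω] (μ : Measure Ω) [IsProbabilityMeasure μ]
    (N t : ℕ) (ht : 1 ≤ t) (m : ℝ) (hm0 : 0 ≤ m) (hm1 : m ≤ 1)
    (Y : Fin N → Ω → ℝ) (hmeas : ∀ i, Measurable (Y i))
    (hindep : ProbabilityTheory.iIndepFun Y μ)
    (hlaw : ∀ i, μ.map (Y i) = bernoulliReal m) :
    μ {ω | Real.sqrt (16 * (((∑ i, Y i ω) / N) * (1 - (∑ i, Y i ω) / N))
            * Real.log (t + 1) / (N + 1))
          + 24 * Real.log (t + 1) / (N + 1)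
        < |(∑ i, Y i ω) / N - m|}
      ≤ ENNReal.ofReal (3 / (t + 1) ^ 4) := by
  set L := Real.log ((t:ℝ) + 1) with hLdef
  have ht1 : (2:ℝ) ≤ (t:ℝ) + 1 := by
    have : (1:ℝ) ≤ (t:ℝ) := by exact_mod_cast ht
    linarith
  have hL : 0 < L := Real.log_pos (by linarith)
  have hLlog2 : Real.log 2 ≤ L := Real.log_le_log (by norm_num) ht1
  have hlog2 : (0.6931471803 : ℝ) < Real.log 2 := Real.log_two_gt_d9
  have hbound_nonneg : (0:ℝ) ≤ 3 / ((t:ℝ) + 1) ^ 4 := by positivity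
  -- the good event
  have hG : ∀ᵐ ω ∂μ, ∀ i, Y i ω = 0 ∨ Y i ω = 1 :=
    MeasureTheory.ae_all_iff.mpr (fun i => bern_ae μ (hmeas i) (hlaw i))
  have hGbad : μ {ω | ¬ ∀ i, Y i ω = 0 ∨ Y i ω = 1} = 0 := by
    rwa [MeasureTheory.ae_iff] at hG
  -- bounds on the sum for good ω
  have hSbound : ∀ ω, (∀ i, Y i ω = 0 ∨ Y i ω = 1) →
      0 ≤ (∑ i, Y i ω) ∧ (∑ i, Y i ω) ≤ N := by
    intro ω hω
    constructor
    · exact Finset.sum_nonneg (fun i _ => by rcases hω i with h | h <;> simp [h])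
    · calc (∑ i, Y i ω) ≤ ∑ _i : Fin N, (1:ℝ) :=
            Finset.sum_le_sum (fun i _ => by rcases hω i with h | h <;> simp [h])
      _ = N := by simp
  have hxmem : ∀ ω, (∀ i, Y i ω = 0 ∨ Y i ω = 1) →
      0 ≤ (∑ i, Y i ω)/(N:ℝ) ∧ (∑ i, Y i ω)/(N:ℝ) ≤ 1 := by
    intro ω hω
    obtain ⟨h1, h2⟩ := hSbound ω hω
    rcases Nat.eq_zero_or_pos N with hN0 | hN0
    · subst hN0
      simp
    · have hN0' : (0:ℝ) < N := by exact_mod_cast hN0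
      exact ⟨div_nonneg h1 hN0'.le, (div_le_one hN0').mpr h2⟩
  by_cases hNsmall : N < 16
  · -- event is empty on the good set
    have hsub : {ω | Real.sqrt (16 * (((∑ i, Y i ω) / N) * (1 - (∑ i, Y i ω) / N))
            * Real.log (t + 1) / (N + 1)) + 24 * Real.log (t + 1) / (N + 1)
          < |(∑ i, Y i ω) / N - m|}
        ⊆ {ω | ¬ ∀ i, Y i ω = 0 ∨ Y i ω = 1} := by
      intro ω hω
      simp only [Set.mem_setOf_eq] at hω ⊢
      intro hgood
      obtain ⟨hx0, hx1⟩ := hxmem ω hgood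
      have hd1 : |(∑ i, Y i ω) / (N:ℝ) - m| ≤ 1 := by
        rw [abs_le]
        constructor <;> [linarith; linarith]
      have hN15 : ((N:ℝ)) ≤ 15 := by
        have : N ≤ 15 := by omega
        exact_mod_cast this
      have h24 : (1:ℝ) < 24 * Real.log ((t:ℝ) + 1) / ((N:ℝ) + 1) := by
        rw [lt_div_iff₀ (by positivity)]
        nlinarith
      have hsq := Real.sqrt_nonneg (16 * (((∑ i, Y i ω) / (N:ℝ)) * (1 - (∑ i, Y i ω) / (N:ℝ)))
            * Real.log ((t:ℝ) + 1) / ((N:ℝ) + 1))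
      push_cast at hω
      linarith
    calc μ _ ≤ μ {ω | ¬ ∀ i, Y i ω = 0 ∨ Y i ω = 1} := measure_mono hsub
      _ = 0 := hGbad
      _ ≤ _ := zero_le
  · push_neg at hNsmall
    have hN0' : (0:ℝ) < N := by
      have : (16:ℝ) ≤ N := by exact_mod_cast hNsmall
      linarith
    by_cases hvz : m * (1-m) = 0
    · -- degenerate: Y i = m a.s.
      have hconst : ∀ᵐ ω ∂μ, ∀ i, Y i ω = m :=
        MeasureTheory.ae_all_iff.mpr (fun i => bern_ae_const μ (hmeas i) (hlaw i) hvz)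
      have hbad : μ {ω | ¬ ∀ i, Y i ω = m} = 0 := by rwa [MeasureTheory.ae_iff] at hconst
      have hsub : {ω | Real.sqrt (16 * (((∑ i, Y i ω) / N) * (1 - (∑ i, Y i ω) / N))
            * Real.log (t + 1) / (N + 1)) + 24 * Real.log (t + 1) / (N + 1)
          < |(∑ i, Y i ω) / N - m|}
        ⊆ {ω | ¬ ∀ i, Y i ω = m} := by
        intro ω hω
        simp only [Set.mem_setOf_eq] at hω ⊢
        intro hgood
        have hsum : (∑ i, Y i ω) = (N:ℝ) * m := by
          rw [Finset.sum_congr rfl (fun i _ => hgood i)]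
          simp [mul_comm]
        have hx : (∑ i, Y i ω)/(N:ℝ) = m := by
          rw [hsum]
          field_simp
        rw [hx] at hω
        simp only [sub_self, abs_zero] at hω
        have h24 : (0:ℝ) < 24 * Real.log ((t:ℝ) + 1) / ((N:ℝ) + 1) := by positivity
        have hsq := Real.sqrt_nonneg (16 * (m * (1 - m)) * Real.log ((t:ℝ) + 1) / ((N:ℝ) + 1))
        push_cast at hω
        linarith
      calc μ _ ≤ μ {ω | ¬ ∀ i, Y i ω = m} := measure_mono hsub
        _ = 0 := hbad
        _ ≤ _ := zero_le
    · -- main case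
      have hv : 0 < m * (1-m) :=
        lt_of_le_of_ne (mul_nonneg hm0 (by linarith)) (Ne.symm hvz)
      set v := m * (1-m) with hvdef
      set ε := Real.sqrt (8*v*L/N) + (8/3)*L/N with hεdef
      have hS0nn : 0 ≤ Real.sqrt (8*v*L/N) := Real.sqrt_nonneg _
      have hc0 : 0 < (8/3)*L/(N:ℝ) := by positivity
      have hε : 0 < ε := by rw [hεdef]; linarith
      have hNε : 8*L*v + (8/3)*L*ε ≤ N*ε^2 := by
        have hS2 : (Real.sqrt (8*v*L/N))^2 = 8*v*L/N := Real.sq_sqrt (by positivity)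
        have hS2' : (N:ℝ)*(Real.sqrt (8*v*L/N))^2 = 8*v*L := by
          rw [hS2]; field_simp
        have hc' : (N:ℝ)*((8/3)*L/N) = (8/3)*L := by field_simp
        have hexpand : (N:ℝ)*ε^2 = (N:ℝ)*(Real.sqrt (8*v*L/N))^2
            + 2*((N:ℝ)*((8/3)*L/N))*(Real.sqrt (8*v*L/N))
            + ((N:ℝ)*((8/3)*L/N))*((8/3)*L/N) := by
          rw [hεdef]; ring
        have hLS : 0 ≤ L * Real.sqrt (8*v*L/N) := mul_nonneg hL.le hS0nn
        rw [hexpand, hS2', hc', hεdef]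
        nlinarith [hLS]
      -- upper tail
      have hup := tail_bound μ N m hm0 hm1 Y hmeas hindep hlaw L ε hL hε hv hNε
      -- lower tail via Z = 1 - Y
      have hg : Measurable (fun x : ℝ => 1 - x) := measurable_const.sub measurable_id
      have hmeasZ : ∀ i, Measurable (fun ω => 1 - Y i ω) :=
        fun i => measurable_const.sub (hmeas i)
      have hindepZ : ProbabilityTheory.iIndepFun
          (fun i => fun ω => 1 - Y i ω) μ := by
        have := hindep.comp (fun i => fun x : ℝ => 1 - x) (fun i => hg)
        exact this
      have hlawZ : ∀ i, μ.map (fun ω => 1 - Y i ω) = bernoulliReal (1-m) := by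
        intro i
        have heq : (fun ω => 1 - Y i ω) = (fun x : ℝ => 1 - x) ∘ (Y i) := rfl
        rw [heq, ← Measure.map_map hg (hmeas i), hlaw i, map_one_sub_bern]
      have hNεZ : 8*L*((1-m)*(1-(1-m))) + (8/3)*L*ε ≤ N*ε^2 := by
        rw [show ((1:ℝ)-m)*(1-(1-m)) = m*(1-m) by ring]
        exact hNε
      have hvZ : 0 < (1-m)*(1-(1-m)) := by
        rw [show ((1:ℝ)-m)*(1-(1-m)) = m*(1-m) by ring]
        exact hv
      have hdn := tail_bound μ N (1-m) (by linarith) (by linarith)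
        (fun i => fun ω => 1 - Y i ω) hmeasZ hindepZ hlawZ L ε hL hε hvZ hNεZ
      -- sets
      set E := {ω | Real.sqrt (16 * (((∑ i, Y i ω) / N) * (1 - (∑ i, Y i ω) / N))
            * Real.log (t + 1) / (N + 1)) + 24 * Real.log (t + 1) / (N + 1)
          < |(∑ i, Y i ω) / N - m|} with hEdef
      set Ep := {ω | (N:ℝ)*m + N*ε ≤ ∑ i, Y i ω} with hEpdef
      set Em := {ω | (N:ℝ)*(1-m) + N*ε ≤ ∑ i, (fun i => fun ω => 1 - Y i ω) i ω} with hEmdef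
      have hsub : E ⊆ Ep ∪ Em ∪ {ω | ¬ ∀ i, Y i ω = 0 ∨ Y i ω = 1} := by
        intro ω hω
        by_cases hgood : ∀ i, Y i ω = 0 ∨ Y i ω = 1
        · left
          by_contra hcon
          simp only [Set.mem_union, not_or] at hcon
          obtain ⟨hp, hm'⟩ := hcon
          simp only [hEpdef, Set.mem_setOf_eq, not_le] at hp
          simp only [hEmdef, Set.mem_setOf_eq, not_le] at hm'
          have hZsum : ∑ i, (1 - Y i ω) = (N:ℝ) - ∑ i, Y i ω := by
            rw [Finset.sum_sub_distrib]
            simp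
          rw [hZsum] at hm'
          obtain ⟨hx0, hx1⟩ := hxmem ω hgood
          have hxup : (∑ i, Y i ω)/(N:ℝ) - m < ε := by
            rw [sub_lt_iff_lt_add, div_lt_iff₀ hN0']
            linarith
          have hxdn : m - (∑ i, Y i ω)/(N:ℝ) < ε := by
            rw [sub_lt_comm, lt_div_iff₀ hN0']
            linarith
          have hdet := det_lemma N hNsmall L ((∑ i, Y i ω)/(N:ℝ)) m hL hx0 hx1 hm0 hm1
            (by rw [← hvdef, ← hεdef]; exact hxup) (by rw [← hvdef, ← hεdef]; exact hxdn)
          simp only [hEdef, Set.mem_setOf_eq] at hω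
          linarith
        · right
          exact hgood
      have hEm_eq : μ Em ≤ ENNReal.ofReal (Real.exp (-(4*L))) := hdn
      have hexp4 : Real.exp (-(4*L)) = (((t:ℝ)+1)^4)⁻¹ := by
        rw [show -(4*L) = -((4:ℕ)*L) by push_cast; ring, Real.exp_neg, Real.exp_nat_mul,
          hLdef, Real.exp_log (by linarith)]
      have hfinal : ENNReal.ofReal (Real.exp (-(4*L))) + ENNReal.ofReal (Real.exp (-(4*L))) + 0
          ≤ ENNReal.ofReal (3 / ((t:ℝ) + 1) ^ 4) := by
        rw [add_zero, ← ENNReal.ofReal_add (Real.exp_pos _).le (Real.exp_pos _).le]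
        apply ENNReal.ofReal_le_ofReal
        rw [hexp4]
        rw [div_eq_mul_inv]
        have : (0:ℝ) < (((t:ℝ)+1)^4)⁻¹ := by positivity
        linarith
      calc μ E ≤ μ (Ep ∪ Em ∪ {ω | ¬ ∀ i, Y i ω = 0 ∨ Y i ω = 1}) := measure_mono hsub
        _ ≤ μ (Ep ∪ Em) + μ {ω | ¬ ∀ i, Y i ω = 0 ∨ Y i ω = 1} := measure_union_le _ _
        _ ≤ μ Ep + μ Em + 0 := by
            rw [hGbad]
            exact add_le_add (measure_union_le _ _) le_rfl
        _ ≤ ENNReal.ofReal (Real.exp (-(4*L))) + ENNReal.ofReal (Real.exp (-(4*L))) + 0 := by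
            exact add_le_add (add_le_add hup hEm_eq) le_rfl
        _ ≤ _ := hfinal
end

section
/- Let t ≥ 1 be an integer, let m ∈ [0, 1], and let Y_1, Y_2, … be an infinite sequence of independent Bernoulli random variables with common mean m. For N ∈ ℕ let ξ̂_N = (1/N) Σ_{i=1}^N Y_i (with ξ̂_0 = 0) and V̂_N = ξ̂_N (1 − ξ̂_N). Then the probability that there exists N ∈ {0, 1, …, t−1} with |ξ̂_N − m| > √( 16 V̂_N log(t+1) / (N+1) ) + 24 log(t+1) / (N+1) is at most 3 / (t+1)^3. -/
open MeasureTheory Real ProbabilityTheory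

set_option linter.unusedSectionVars false

/-- quartic upper bound on exp on [-1,1] -/
lemma exp_quartic {x : ℝ} (hx : |x| ≤ 1) :
    Real.exp x ≤ 1 + x + x^2/2 + x^3/6 + 5/96*x^4 := by
  have h := Real.exp_bound hx (n := 4) (by norm_num)
  have hsum : ∑ m ∈ Finset.range 4, x ^ m / m.factorial = 1 + x + x^2/2 + x^3/6 := by
    rw [Finset.sum_range_succ, Finset.sum_range_succ, Finset.sum_range_succ,
      Finset.sum_range_one]
    norm_num [Nat.factorial]
  have habs : |x|^4 = x^4 := by
    rw [← abs_pow, abs_of_nonneg (by positivity)]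
  rw [hsum, habs] at h
  have h2 := (abs_sub_le_iff.1 h).1
  norm_num [Nat.factorial] at h2 ⊢
  nlinarith [h2]

/-- Bennett-type mgf bound for a Bernoulli variable, λ ∈ [0,1]. -/
lemma bernoulli_mgf_aux {m lam : ℝ} (hm0 : 0 ≤ m) (hm1 : m ≤ 1)
    (h0 : 0 ≤ lam) (h1 : lam ≤ 1) :
    (1-m) * Real.exp (-(lam*m)) + m * Real.exp (lam*(1-m))
      ≤ Real.exp (m*(1-m) * (lam^2/2 + lam^3/6 + 5*lam^4/96)) := by
  have hb1 : Real.exp (lam*(1-m)) ≤ 1 + (lam*(1-m)) + (lam*(1-m))^2/2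
      + (lam*(1-m))^3/6 + 5/96*(lam*(1-m))^4 := by
    apply exp_quartic
    rw [abs_of_nonneg (by nlinarith)]
    nlinarith
  have hb2 : Real.exp (-(lam*m)) ≤ 1 - (lam*m) + (lam*m)^2/2
      - (lam*m)^3/6 + 5/96*(lam*m)^4 := by
    have := exp_quartic (x := -(lam*m)) (by rw [abs_neg, abs_of_nonneg (by positivity)]; nlinarith)
    nlinarith [this]
  have hP : (1-m) * (1 - (lam*m) + (lam*m)^2/2 - (lam*m)^3/6 + 5/96*(lam*m)^4)
      + m * (1 + (lam*(1-m)) + (lam*(1-m))^2/2 + (lam*(1-m))^3/6 + 5/96*(lam*(1-m))^4)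
      = 1 + m*(1-m) * (lam^2/2 + lam^3*(1-2*m)/6 + 5*lam^4*(1-3*(m*(1-m)))/96) := by
    ring
  have hmono : m*(1-m) * (lam^2/2 + lam^3*(1-2*m)/6 + 5*lam^4*(1-3*(m*(1-m)))/96)
      ≤ m*(1-m) * (lam^2/2 + lam^3/6 + 5*lam^4/96) := by
    have hmm : 0 ≤ m*(1-m) := by nlinarith
    have h3 : lam^3*(1-2*m)/6 ≤ lam^3/6 := by nlinarith [pow_nonneg h0 3]
    have h4 : 5*lam^4*(1-3*(m*(1-m)))/96 ≤ 5*lam^4/96 := by nlinarith [pow_nonneg h0 4]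
    nlinarith
  calc (1-m) * Real.exp (-(lam*m)) + m * Real.exp (lam*(1-m))
      ≤ (1-m) * (1 - (lam*m) + (lam*m)^2/2 - (lam*m)^3/6 + 5/96*(lam*m)^4)
        + m * (1 + (lam*(1-m)) + (lam*(1-m))^2/2 + (lam*(1-m))^3/6 + 5/96*(lam*(1-m))^4) := by
        have e1 : 0 ≤ 1 - m := by linarith
        gcongr
    _ = 1 + m*(1-m) * (lam^2/2 + lam^3*(1-2*m)/6 + 5*lam^4*(1-3*(m*(1-m)))/96) := hP
    _ ≤ 1 + m*(1-m) * (lam^2/2 + lam^3/6 + 5*lam^4/96) := by linarith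
    _ ≤ Real.exp (m*(1-m) * (lam^2/2 + lam^3/6 + 5*lam^4/96)) := by
        linarith [Real.add_one_le_exp (m*(1-m) * (lam^2/2 + lam^3/6 + 5*lam^4/96))]

lemma sqrt_add_le'_s18 {A B : ℝ} (hA : 0 ≤ A) (hB : 0 ≤ B) :
    Real.sqrt (A + B) ≤ Real.sqrt A + Real.sqrt B := by
  have h1 : A + B ≤ (Real.sqrt A + Real.sqrt B)^2 := by
    nlinarith [Real.sq_sqrt hA, Real.sq_sqrt hB, Real.sqrt_nonneg A, Real.sqrt_nonneg B]
  calc Real.sqrt (A + B) ≤ Real.sqrt ((Real.sqrt A + Real.sqrt B)^2) := Real.sqrt_le_sqrt h1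
    _ = Real.sqrt A + Real.sqrt B := Real.sqrt_sq (by positivity)

/-- deterministic step: the tail threshold is below the empirical-Bernstein bound. -/
lemma detNum {sg2 V q : ℝ} (hsg : 0 ≤ sg2) (hV : 0 ≤ V) (hq : 0 ≤ q)
    (hle : sg2 ≤ V + (Real.sqrt ((45/4)*sg2*q) + (27/4)*q)) :
    Real.sqrt ((45/4)*sg2*q) + (27/4)*q ≤ Real.sqrt (16*V*q) + 24*q := by
  set u := Real.sqrt ((45/4)*sg2*q) with hu
  have hu0 : 0 ≤ u := Real.sqrt_nonneg _
  have hu2 : u^2 = (45/4)*sg2*q := Real.sq_sqrt (by positivity)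
  have hkey : (u - (45/8)*q)^2 ≤ (45/4)*V*q + (6885/64)*q^2 := by
    have hmul : (45/4)*q*sg2 ≤ (45/4)*q*(V + (u + (27/4)*q)) := by
      apply mul_le_mul_of_nonneg_left _ (by positivity)
      linarith
    nlinarith [hmul, hu2]
  have hstep : u - (45/8)*q ≤ Real.sqrt ((45/4)*V*q + (6885/64)*q^2) := by
    calc u - (45/8)*q ≤ |u - (45/8)*q| := le_abs_self _
      _ = Real.sqrt ((u - (45/8)*q)^2) := (Real.sqrt_sq_eq_abs _).symm
      _ ≤ _ := Real.sqrt_le_sqrt hkey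
  have hsplit : Real.sqrt ((45/4)*V*q + (6885/64)*q^2)
      ≤ Real.sqrt (16*V*q) + (93/8)*q := by
    have h1 : Real.sqrt ((45/4)*V*q + (6885/64)*q^2)
        ≤ Real.sqrt ((45/4)*V*q) + Real.sqrt ((6885/64)*q^2) :=
      sqrt_add_le'_s18 (by positivity) (by positivity)
    have h2 : Real.sqrt ((45/4)*V*q) ≤ Real.sqrt (16*V*q) :=
      Real.sqrt_le_sqrt (by nlinarith)
    have h3 : Real.sqrt ((6885/64)*q^2) ≤ (93/8)*q := by
      calc Real.sqrt ((6885/64)*q^2) ≤ Real.sqrt (((93/8)*q)^2) :=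
            Real.sqrt_le_sqrt (by nlinarith)
        _ = (93/8)*q := Real.sqrt_sq (by positivity)
    linarith
  linarith

/-- choice of the Chernoff parameter. -/
lemma tailNum {sg2 r : ℝ} (hsg : 0 ≤ sg2) (hr : 0 < r) :
    ∃ lam : ℝ, 0 ≤ lam ∧ lam ≤ 1 ∧
      sg2*(lam^2/2 + lam^3/6 + 5*lam^4/96)
        - lam*(Real.sqrt (10*sg2*r) + 6*r) ≤ -(4*r) := by
  rcases le_or_gt sg2 (10*r) with hc | hc
  · refine ⟨1, by norm_num, le_refl 1, ?_⟩
    have h1 : sg2 ≤ Real.sqrt (10*sg2*r) := by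
      calc sg2 = Real.sqrt (sg2^2) := (Real.sqrt_sq hsg).symm
        _ ≤ Real.sqrt (10*sg2*r) := Real.sqrt_le_sqrt (by nlinarith)
    nlinarith
  · have hsgpos : 0 < sg2 := lt_trans (by positivity) hc
    refine ⟨Real.sqrt (10*r/sg2), Real.sqrt_nonneg _, ?_, ?_⟩
    · rw [show (1:ℝ) = Real.sqrt 1 by simp]
      apply Real.sqrt_le_sqrt
      rw [div_le_one hsgpos]
      linarith
    · set lam := Real.sqrt (10*r/sg2) with hlam
      have hl0 : 0 ≤ lam := Real.sqrt_nonneg _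
      have hl2 : lam^2 = 10*r/sg2 := Real.sq_sqrt (by positivity)
      have hl1 : lam ≤ 1 := by
        rw [hlam, show (1:ℝ) = Real.sqrt 1 by simp]
        apply Real.sqrt_le_sqrt
        rw [div_le_one hsgpos]
        linarith
      have hsl2 : sg2 * lam^2 = 10*r := by
        rw [hl2]; field_simp
      have hprod : lam * Real.sqrt (10*sg2*r) = 10*r := by
        rw [hlam, ← Real.sqrt_mul (by positivity)]
        rw [show 10*r/sg2 * (10*sg2*r) = (10*r)^2 by field_simp]
        exact Real.sqrt_sq (by positivity)
      have e3 : sg2 * lam^3 = 10*r*lam := by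
        rw [show lam^3 = lam^2 * lam by ring, ← mul_assoc, hsl2]
      have e4 : sg2 * lam^4 = 10*r*lam^2 := by
        rw [show lam^4 = lam^2 * lam^2 by ring, ← mul_assoc, hsl2]
      have hll : lam^2 ≤ 1 := by nlinarith
      nlinarith [mul_le_of_le_one_right hr.le hll, mul_nonneg hr.le hl0]

section auxiliary

variable {Ω : Type*} [MeasurableSpace Ω] (μ : Measure Ω) [IsProbabilityMeasure μ]
  {m : ℝ} (Y : ℕ → Ω → ℝ)

lemma ae_zero_one (hmeas : ∀ i, Measurable (Y i))
    (hlaw : ∀ i, μ.map (Y i) = bernoulliReal m) :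
    ∀ᵐ ω ∂μ, ∀ i, Y i ω = 0 ∨ Y i ω = 1 := by
  rw [MeasureTheory.ae_all_iff]
  intro i
  have hs : MeasurableSet ({0, 1}ᶜ : Set ℝ) := (by measurability)
  have h0 : μ ((Y i) ⁻¹' ({0, 1}ᶜ : Set ℝ)) = 0 := by
    rw [← Measure.map_apply (hmeas i) hs, hlaw i]
    unfold bernoulliReal
    rw [Measure.add_apply, Measure.smul_apply, Measure.smul_apply,
      Measure.dirac_apply' _ hs, Measure.dirac_apply' _ hs]
    simp
  have hset : {a | ¬(Y i a = 0 ∨ Y i a = 1)} = (Y i) ⁻¹' ({0, 1}ᶜ : Set ℝ) := by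
    ext ω; simp [not_or]
  rw [ae_iff, hset]
  exact h0

lemma integral_exp_bernoulli (hm0 : 0 ≤ m) (hm1 : m ≤ 1) (i : ℕ)
    (hmeas : ∀ i, Measurable (Y i))
    (hlaw : ∀ i, μ.map (Y i) = bernoulliReal m) (s : ℝ) :
    ∫ ω, Real.exp (s * Y i ω) ∂μ = (1-m) + m * Real.exp s := by
  have hg : Measurable fun y : ℝ => Real.exp (s * y) :=
    Real.measurable_exp.comp (measurable_id.const_mul s)
  have h1 : ∫ ω, Real.exp (s * Y i ω) ∂μ = ∫ y, Real.exp (s * y) ∂(μ.map (Y i)) :=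
    (integral_map (hmeas i).aemeasurable hg.aestronglyMeasurable).symm
  have hdint : ∀ x : ℝ, Integrable (fun y => Real.exp (s * y)) (Measure.dirac x) := by
    intro x
    refine ⟨hg.aestronglyMeasurable, ?_⟩
    rw [HasFiniteIntegral, lintegral_dirac' _ (by measurability)]
    exact ENNReal.coe_lt_top
  rw [h1, hlaw i]
  unfold bernoulliReal
  rw [integral_add_measure (((hdint 1).smul_measure ENNReal.ofReal_ne_top))
    (((hdint 0).smul_measure ENNReal.ofReal_ne_top)),
    integral_smul_measure, integral_smul_measure, integral_dirac, integral_dirac,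
    ENNReal.toReal_ofReal hm0, ENNReal.toReal_ofReal (by linarith)]
  simp [mul_comm]
  ring

lemma sum_integrable_exp (hmeas : ∀ i, Measurable (Y i))
    (hae : ∀ᵐ ω ∂μ, ∀ i, Y i ω = 0 ∨ Y i ω = 1) (N : ℕ) (s : ℝ) :
    Integrable (fun ω => Real.exp (s * (∑ i ∈ Finset.range N, Y i) ω)) μ := by
  simp only [Finset.sum_apply]
  have hSm : Measurable fun ω => ∑ i ∈ Finset.range N, Y i ω :=
    Finset.measurable_sum _ (fun i _ => hmeas i)
  refine Integrable.mono' (integrable_const (Real.exp (|s| * N)))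
    ((hSm.const_mul s).exp.aestronglyMeasurable) ?_
  filter_upwards [hae] with ω hω
  have hsum0 : 0 ≤ ∑ i ∈ Finset.range N, Y i ω :=
    Finset.sum_nonneg fun i _ => by rcases hω i with h | h <;> simp [h]
  have hsum1 : ∑ i ∈ Finset.range N, Y i ω ≤ N := by
    calc ∑ i ∈ Finset.range N, Y i ω ≤ ∑ i ∈ Finset.range N, (1:ℝ) :=
        Finset.sum_le_sum fun i _ => by rcases hω i with h | h <;> simp [h]
      _ = N := by simp
  rw [Real.norm_eq_abs, abs_of_pos (Real.exp_pos _), Real.exp_le_exp]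
  calc s * ∑ i ∈ Finset.range N, Y i ω ≤ |s| * ∑ i ∈ Finset.range N, Y i ω := by
        exact mul_le_mul_of_nonneg_right (le_abs_self s) hsum0
    _ ≤ |s| * N := mul_le_mul_of_nonneg_left hsum1 (abs_nonneg s)


lemma chernoff_up (hm0 : 0 ≤ m) (hm1 : m ≤ 1)
    (hmeas : ∀ i, Measurable (Y i))
    (hindep : ProbabilityTheory.iIndepFun Y μ)
    (hlaw : ∀ i, μ.map (Y i) = bernoulliReal m)
    (hae : ∀ᵐ ω ∂μ, ∀ i, Y i ω = 0 ∨ Y i ω = 1)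
    (N : ℕ) (lam d : ℝ) (hl0 : 0 ≤ lam) (hl1 : lam ≤ 1) :
    μ {ω | (N:ℝ)*(m + d) ≤ (∑ i ∈ Finset.range N, Y i) ω}
      ≤ ENNReal.ofReal (Real.exp ((N:ℝ) *
          (m*(1-m)*(lam^2/2 + lam^3/6 + 5*lam^4/96) - lam*d))) := by
  set Ψ := lam^2/2 + lam^3/6 + 5*lam^4/96 with hΨ
  have hint := sum_integrable_exp μ Y hmeas hae N lam
  have hC := measure_ge_le_exp_mul_mgf ((N:ℝ)*(m + d)) hl0 hint
  have hmgf1 : ∀ i : ℕ, mgf (Y i) μ lam = (1-m) + m * Real.exp lam := fun i =>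
    integral_exp_bernoulli μ Y hm0 hm1 i hmeas hlaw lam
  have hmgfS : mgf (∑ i ∈ Finset.range N, Y i) μ lam = ((1-m) + m * Real.exp lam)^N := by
    rw [hindep.mgf_sum hmeas (Finset.range N)]
    rw [Finset.prod_congr rfl (fun i _ => hmgf1 i), Finset.prod_const, Finset.card_range]
  rw [hmgfS] at hC
  -- factor bound
  have key := bernoulli_mgf_aux hm0 hm1 hl0 hl1
  have hexpand : Real.exp (lam*m) * ((1-m)*Real.exp (-(lam*m)) + m*Real.exp (lam*(1-m)))
      = (1-m) + m*Real.exp lam := by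
    have e1 : Real.exp (lam*m) * Real.exp (-(lam*m)) = 1 := by
      rw [← Real.exp_add]; simp
    have e2 : Real.exp (lam*m) * Real.exp (lam*(1-m)) = Real.exp lam := by
      rw [← Real.exp_add]; ring_nf
    linear_combination (1-m) * e1 + m * e2
  have hfac : (1-m) + m*Real.exp lam ≤ Real.exp (lam*m + m*(1-m)*Ψ) := by
    rw [← hexpand, Real.exp_add]
    exact mul_le_mul_of_nonneg_left key (Real.exp_pos _).le
  have hbase : (0:ℝ) ≤ (1-m) + m*Real.exp lam := by
    nlinarith [Real.exp_pos lam]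
  have hpow : ((1-m) + m*Real.exp lam)^N ≤ Real.exp ((N:ℝ)*(lam*m + m*(1-m)*Ψ)) := by
    calc ((1-m) + m*Real.exp lam)^N ≤ (Real.exp (lam*m + m*(1-m)*Ψ))^N :=
          pow_le_pow_left₀ hbase hfac N
      _ = Real.exp ((N:ℝ)*(lam*m + m*(1-m)*Ψ)) := (Real.exp_nat_mul _ N).symm
  have hreal : Real.exp (-lam * ((N:ℝ)*(m + d))) * ((1-m) + m*Real.exp lam)^N
      ≤ Real.exp ((N:ℝ)*(m*(1-m)*Ψ - lam*d)) := by
    calc Real.exp (-lam * ((N:ℝ)*(m + d))) * ((1-m) + m*Real.exp lam)^N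
        ≤ Real.exp (-lam * ((N:ℝ)*(m + d))) * Real.exp ((N:ℝ)*(lam*m + m*(1-m)*Ψ)) :=
          mul_le_mul_of_nonneg_left hpow (Real.exp_pos _).le
      _ = Real.exp ((N:ℝ)*(m*(1-m)*Ψ - lam*d)) := by
          rw [← Real.exp_add]; congr 1; ring
  have := le_trans hC hreal
  calc μ {ω | (N:ℝ)*(m + d) ≤ (∑ i ∈ Finset.range N, Y i) ω}
      = ENNReal.ofReal ((μ {ω | (N:ℝ)*(m + d) ≤ (∑ i ∈ Finset.range N, Y i) ω}).toReal) :=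
        (ENNReal.ofReal_toReal (measure_ne_top μ _)).symm
    _ ≤ _ := ENNReal.ofReal_le_ofReal this

lemma chernoff_lo (hm0 : 0 ≤ m) (hm1 : m ≤ 1)
    (hmeas : ∀ i, Measurable (Y i))
    (hindep : ProbabilityTheory.iIndepFun Y μ)
    (hlaw : ∀ i, μ.map (Y i) = bernoulliReal m)
    (hae : ∀ᵐ ω ∂μ, ∀ i, Y i ω = 0 ∨ Y i ω = 1)
    (N : ℕ) (lam d : ℝ) (hl0 : 0 ≤ lam) (hl1 : lam ≤ 1) :
    μ {ω | (∑ i ∈ Finset.range N, Y i) ω ≤ (N:ℝ)*(m - d)}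
      ≤ ENNReal.ofReal (Real.exp ((N:ℝ) *
          (m*(1-m)*(lam^2/2 + lam^3/6 + 5*lam^4/96) - lam*d))) := by
  set Ψ := lam^2/2 + lam^3/6 + 5*lam^4/96 with hΨ
  have hint := sum_integrable_exp μ Y hmeas hae N (-lam)
  have hC := measure_le_le_exp_mul_mgf ((N:ℝ)*(m - d)) (neg_nonpos.mpr hl0) hint
  have hmgf1 : ∀ i : ℕ, mgf (Y i) μ (-lam) = (1-m) + m * Real.exp (-lam) := fun i =>
    integral_exp_bernoulli μ Y hm0 hm1 i hmeas hlaw (-lam)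
  have hmgfS : mgf (∑ i ∈ Finset.range N, Y i) μ (-lam)
      = ((1-m) + m * Real.exp (-lam))^N := by
    rw [hindep.mgf_sum hmeas (Finset.range N)]
    rw [Finset.prod_congr rfl (fun i _ => hmgf1 i), Finset.prod_const, Finset.card_range]
  rw [hmgfS] at hC
  have key0 := bernoulli_mgf_aux (m := 1-m) (by linarith) (by linarith) hl0 hl1
  have hm' : (1:ℝ) - (1-m) = m := by ring
  rw [hm'] at key0
  -- key0 : m * exp (-(lam*(1-m))) + (1-m) * exp (lam*m) ≤ exp ((1-m)*m*Ψ)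
  rw [show ((1:ℝ)-m)*m*Ψ = m*(1-m)*Ψ by ring] at key0
  have hexpand : Real.exp (-(lam*m)) * (m*Real.exp (-(lam*(1-m))) + (1-m)*Real.exp (lam*m))
      = (1-m) + m*Real.exp (-lam) := by
    have e1 : Real.exp (-(lam*m)) * Real.exp (lam*m) = 1 := by
      rw [← Real.exp_add]; simp
    have e2 : Real.exp (-(lam*m)) * Real.exp (-(lam*(1-m))) = Real.exp (-lam) := by
      rw [← Real.exp_add]; ring_nf
    linear_combination m * e2 + (1-m) * e1
  have hfac : (1-m) + m*Real.exp (-lam) ≤ Real.exp (-(lam*m) + m*(1-m)*Ψ) := by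
    rw [← hexpand, Real.exp_add]
    exact mul_le_mul_of_nonneg_left key0 (Real.exp_pos _).le
  have hbase : (0:ℝ) ≤ (1-m) + m*Real.exp (-lam) := by
    nlinarith [Real.exp_pos (-lam)]
  have hpow : ((1-m) + m*Real.exp (-lam))^N ≤ Real.exp ((N:ℝ)*(-(lam*m) + m*(1-m)*Ψ)) := by
    calc ((1-m) + m*Real.exp (-lam))^N ≤ (Real.exp (-(lam*m) + m*(1-m)*Ψ))^N :=
          pow_le_pow_left₀ hbase hfac N
      _ = Real.exp ((N:ℝ)*(-(lam*m) + m*(1-m)*Ψ)) := (Real.exp_nat_mul _ N).symm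
  have hreal : Real.exp (-(-lam) * ((N:ℝ)*(m - d))) * ((1-m) + m*Real.exp (-lam))^N
      ≤ Real.exp ((N:ℝ)*(m*(1-m)*Ψ - lam*d)) := by
    calc Real.exp (-(-lam) * ((N:ℝ)*(m - d))) * ((1-m) + m*Real.exp (-lam))^N
        ≤ Real.exp (-(-lam) * ((N:ℝ)*(m - d))) * Real.exp ((N:ℝ)*(-(lam*m) + m*(1-m)*Ψ)) :=
          mul_le_mul_of_nonneg_left hpow (Real.exp_pos _).le
      _ = Real.exp ((N:ℝ)*(m*(1-m)*Ψ - lam*d)) := by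
          rw [← Real.exp_add]; congr 1; ring
  have hfin := le_trans hC hreal
  calc μ {ω | (∑ i ∈ Finset.range N, Y i) ω ≤ (N:ℝ)*(m - d)}
      = ENNReal.ofReal ((μ {ω | (∑ i ∈ Finset.range N, Y i) ω ≤ (N:ℝ)*(m - d)}).toReal) :=
        (ENNReal.ofReal_toReal (measure_ne_top μ _)).symm
    _ ≤ _ := ENNReal.ofReal_le_ofReal hfin


end auxiliary

set_option maxHeartbeats 1000000 in
/-- Uniform (over sample sizes `N < t`) empirical-Bernstein concentration for an
i.i.d. Bernoulli(`m`) sequence: with `ξ̂_N = (1/N) ∑_{i<N} Y_i` (so `ξ̂_0 = 0` by the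
division-by-zero convention) and `V̂_N = ξ̂_N (1 - ξ̂_N)`, the probability that some
`N ∈ {0, …, t-1}` satisfies `|ξ̂_N - m| > √(16 V̂_N log(t+1)/(N+1)) + 24 log(t+1)/(N+1)` is
at most `3/(t+1)³`. -/
theorem stmt_18 {Ω : Type*} [MeasurableSpace Ω] (μ : Measure Ω) [IsProbabilityMeasure μ]
    (t : ℕ) (ht : 1 ≤ t) (m : ℝ) (hm0 : 0 ≤ m) (hm1 : m ≤ 1)
    (Y : ℕ → Ω → ℝ) (hmeas : ∀ i, Measurable (Y i))
    (hindep : ProbabilityTheory.iIndepFun Y μ)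
    (hlaw : ∀ i, μ.map (Y i) = bernoulliReal m) :
    μ {ω | ∃ N < t,
        Real.sqrt (16 * (((∑ i ∈ Finset.range N, Y i ω) / N)
              * (1 - (∑ i ∈ Finset.range N, Y i ω) / N))
            * Real.log (t + 1) / (N + 1))
          + 24 * Real.log (t + 1) / (N + 1)
        < |(∑ i ∈ Finset.range N, Y i ω) / N - m|}
      ≤ ENNReal.ofReal (3 / (t + 1) ^ 3) := by
  classical
  have htR : (1:ℝ) ≤ (t:ℝ) := by exact_mod_cast ht
  obtain ⟨L, hLdef⟩ : ∃ x : ℝ, x = Real.log ((t:ℝ) + 1) := ⟨_, rfl⟩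
  rw [show Real.log ((t:ℝ) + 1) = L from hLdef.symm]
  have hL2 : Real.log 2 ≤ L := by
    rw [hLdef]
    apply Real.log_le_log (by norm_num)
    linarith
  have hLlb : (0.6931471803:ℝ) < L := lt_of_lt_of_le Real.log_two_gt_d9 hL2
  have hLpos : 0 < L := by linarith
  have hsg0 : 0 ≤ m*(1-m) := by nlinarith
  have hae := ae_zero_one μ Y hmeas hlaw
  obtain ⟨d, hddef⟩ : ∃ dd : ℕ → ℝ,
      dd = fun N : ℕ => Real.sqrt (10*(m*(1-m))*(L/(N:ℝ))) + 6*(L/(N:ℝ)) := ⟨_, rfl⟩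
  obtain ⟨U, hUdef⟩ : ∃ UU : ℕ → Set Ω,
      UU = fun N : ℕ => {ω | (N:ℝ)*(m + d N) ≤ ∑ i ∈ Finset.range N, Y i ω} := ⟨_, rfl⟩
  obtain ⟨Lo, hLodef⟩ : ∃ LL : ℕ → Set Ω,
      LL = fun N : ℕ => {ω | ∑ i ∈ Finset.range N, Y i ω ≤ (N:ℝ)*(m - d N)} := ⟨_, rfl⟩
  obtain ⟨G, hGdef⟩ : ∃ GG : Set Ω,
      GG = {ω | ∀ i, Y i ω = 0 ∨ Y i ω = 1} := ⟨_, rfl⟩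
  have hG0 : μ Gᶜ = 0 := by
    rw [hGdef, Set.compl_setOf]
    exact ae_iff.1 hae
  -- per-N tail bound
  have htail : ∀ N : ℕ, 1 ≤ N →
      μ (U N) + μ (Lo N) ≤ ENNReal.ofReal (2/((t:ℝ)+1)^4) := by
    intro N hN1
    have hNpos : (0:ℝ) < (N:ℝ) := by exact_mod_cast hN1
    have hr : 0 < L/(N:ℝ) := by positivity
    obtain ⟨lam, hl0, hl1, hineq⟩ := tailNum hsg0 hr
    have hup := chernoff_up μ Y hm0 hm1 hmeas hindep hlaw hae N lam (d N) hl0 hl1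
    have hlo := chernoff_lo μ Y hm0 hm1 hmeas hindep hlaw hae N lam (d N) hl0 hl1
    simp only [Finset.sum_apply] at hup hlo
    have hexp : Real.exp ((N:ℝ) *
        (m*(1-m)*(lam^2/2 + lam^3/6 + 5*lam^4/96) - lam*(d N))) ≤ 1/((t:ℝ)+1)^4 := by
      have h1 : (N:ℝ) * (m*(1-m)*(lam^2/2 + lam^3/6 + 5*lam^4/96) - lam*(d N))
          ≤ (N:ℝ) * (-(4*(L/(N:ℝ)))) := by
        apply mul_le_mul_of_nonneg_left _ (le_of_lt hNpos)
        rw [hddef]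
        exact hineq
      have h2 : (N:ℝ) * (-(4*(L/(N:ℝ)))) = -(4*L) := by
        field_simp
      have h3 : Real.exp (-(4*L)) = 1/((t:ℝ)+1)^4 := by
        have h4 : Real.exp L = (t:ℝ)+1 := by rw [hLdef]; exact Real.exp_log (by linarith)
        rw [show -(4*L) = (4:ℕ)*(-L) by push_cast; ring, Real.exp_nat_mul, Real.exp_neg, h4]
        rw [inv_pow, one_div]
      rw [← h3]
      apply Real.exp_le_exp.2
      rw [← h2]; exact h1
    have hup2 : μ (U N) ≤ ENNReal.ofReal (1/((t:ℝ)+1)^4) := by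
      rw [hUdef]
      exact le_trans hup (ENNReal.ofReal_le_ofReal hexp)
    have hlo2 : μ (Lo N) ≤ ENNReal.ofReal (1/((t:ℝ)+1)^4) := by
      rw [hLodef]
      exact le_trans hlo (ENNReal.ofReal_le_ofReal hexp)
    calc μ (U N) + μ (Lo N)
        ≤ ENNReal.ofReal (1/((t:ℝ)+1)^4) + ENNReal.ofReal (1/((t:ℝ)+1)^4) :=
          add_le_add hup2 hlo2
      _ = ENNReal.ofReal (2/((t:ℝ)+1)^4) := by
          rw [← ENNReal.ofReal_add (by positivity) (by positivity)]
          ring_nf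
  -- subset step
  have hsub : {ω | ∃ N < t,
      Real.sqrt (16 * (((∑ i ∈ Finset.range N, Y i ω) / N)
            * (1 - (∑ i ∈ Finset.range N, Y i ω) / N)) * L / (N + 1))
        + 24 * L / (N + 1)
      < |(∑ i ∈ Finset.range N, Y i ω) / N - m|} ∩ G
      ⊆ ⋃ N ∈ Finset.Ico 1 t, (U N ∪ Lo N) := by
    rintro ω ⟨hev, hG⟩
    obtain ⟨N, hNt, hev⟩ := hev
    rw [hGdef] at hG
    have hω : ∀ i, Y i ω = 0 ∨ Y i ω = 1 := hG
    have hs0 : 0 ≤ ∑ i ∈ Finset.range N, Y i ω :=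
      Finset.sum_nonneg fun i _ => by rcases hω i with h | h <;> simp [h]
    have hs1 : ∑ i ∈ Finset.range N, Y i ω ≤ N := by
      calc ∑ i ∈ Finset.range N, Y i ω ≤ ∑ i ∈ Finset.range N, (1:ℝ) :=
          Finset.sum_le_sum fun i _ => by rcases hω i with h | h <;> simp [h]
        _ = N := by simp
    obtain ⟨ξ, hxidef⟩ : ∃ x : ℝ, x = (∑ i ∈ Finset.range N, Y i ω) / (N:ℝ) := ⟨_, rfl⟩
    rw [show ((∑ i ∈ Finset.range N, Y i ω) / (N:ℝ)) = ξ from hxidef.symm] at hev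
    have hξ0 : 0 ≤ ξ := hxidef ▸ div_nonneg hs0 (Nat.cast_nonneg N)
    have hξ1 : ξ ≤ 1 := by
      rcases Nat.eq_zero_or_pos N with h | h
      · rw [hxidef, h]; norm_num
      · rw [hxidef, div_le_one (by exact_mod_cast h)]
        exact hs1
    have hε1 : |ξ - m| ≤ 1 := abs_le.2 ⟨by linarith, by linarith⟩
    have hsqrt0 : 0 ≤ Real.sqrt (16 * (ξ * (1 - ξ)) * L / ((N:ℝ) + 1)) :=
      Real.sqrt_nonneg _
    have hNadd : (0:ℝ) < (N:ℝ) + 1 := by positivity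
    have h24 : 24 * L / ((N:ℝ) + 1) < 1 := by
      calc 24 * L / ((N:ℝ) + 1)
          ≤ Real.sqrt (16 * (ξ * (1 - ξ)) * L / ((N:ℝ) + 1)) + 24 * L / ((N:ℝ) + 1) := by
            linarith
        _ < |ξ - m| := hev
        _ ≤ 1 := hε1
    have hL24 : 24 * L < (N:ℝ) + 1 := by
      rw [div_lt_one hNadd] at h24
      exact h24
    have hN8R : (8:ℝ) ≤ (N:ℝ) := by nlinarith
    have hN1 : 1 ≤ N := by exact_mod_cast le_trans (by norm_num : (1:ℝ) ≤ 8) hN8R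
    have hNpos : (0:ℝ) < (N:ℝ) := by linarith
    -- deterministic step
    have hdlt : d N < |ξ - m| := by
      by_contra hcon
      push_neg at hcon
      rw [hddef] at hcon
      simp only at hcon
      have hV0 : 0 ≤ ξ*(1-ξ) := by nlinarith
      have hq0 : 0 ≤ L/((N:ℝ)+1) := by positivity
      have hrq : L/(N:ℝ) ≤ (9/8)*(L/((N:ℝ)+1)) := by
        rw [div_le_iff₀ hNpos,
          show (9:ℝ)/8*(L/((N:ℝ)+1))*(N:ℝ) = (9*L*(N:ℝ))/(8*((N:ℝ)+1)) by field_simp,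
          le_div_iff₀ (by positivity)]
        nlinarith [mul_le_mul_of_nonneg_left hN8R hLpos.le]
      have hsq : Real.sqrt (10*(m*(1-m))*(L/(N:ℝ)))
          ≤ Real.sqrt ((45/4)*(m*(1-m))*(L/((N:ℝ)+1))) := by
        apply Real.sqrt_le_sqrt
        calc 10*(m*(1-m))*(L/(N:ℝ))
            ≤ 10*(m*(1-m))*((9/8)*(L/((N:ℝ)+1))) :=
              mul_le_mul_of_nonneg_left hrq (by positivity)
          _ = (45/4)*(m*(1-m))*(L/((N:ℝ)+1)) := by ring
      have h6 : 6*(L/(N:ℝ)) ≤ (27/4)*(L/((N:ℝ)+1)) := by linarith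
      have hdD : Real.sqrt (10*(m*(1-m))*(L/(N:ℝ))) + 6*(L/(N:ℝ))
          ≤ Real.sqrt ((45/4)*(m*(1-m))*(L/((N:ℝ)+1))) + (27/4)*(L/((N:ℝ)+1)) := by
        linarith
      have hsgV : m*(1-m) ≤ ξ*(1-ξ) + (Real.sqrt ((45/4)*(m*(1-m))*(L/((N:ℝ)+1)))
          + (27/4)*(L/((N:ℝ)+1))) := by
        have habs1 : |1 - m - ξ| ≤ 1 := abs_le.2 ⟨by linarith, by linarith⟩
        have habs2 : (m - ξ)*(1 - m - ξ) ≤ |ξ - m| := by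
          calc (m - ξ)*(1 - m - ξ) ≤ |(m - ξ)*(1 - m - ξ)| := le_abs_self _
            _ = |m - ξ| * |1 - m - ξ| := abs_mul _ _
            _ ≤ |m - ξ| * 1 := mul_le_mul_of_nonneg_left habs1 (abs_nonneg _)
            _ = |ξ - m| := by rw [mul_one, abs_sub_comm]
        have hid : m*(1-m) - ξ*(1-ξ) = (m - ξ)*(1 - m - ξ) := by ring
        linarith
      have hdet := detNum hsg0 hV0 hq0 hsgV
      have hcontr : |ξ - m| < |ξ - m| := by
        calc |ξ - m| ≤ Real.sqrt (10*(m*(1-m))*(L/(N:ℝ))) + 6*(L/(N:ℝ)) := hcon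
          _ ≤ Real.sqrt ((45/4)*(m*(1-m))*(L/((N:ℝ)+1))) + (27/4)*(L/((N:ℝ)+1)) := hdD
          _ ≤ Real.sqrt (16*(ξ*(1-ξ))*(L/((N:ℝ)+1))) + 24*(L/((N:ℝ)+1)) := hdet
          _ = Real.sqrt (16 * (ξ * (1 - ξ)) * L / ((N:ℝ) + 1)) + 24 * L / ((N:ℝ) + 1) := by
              rw [show 16*(ξ*(1-ξ))*(L/((N:ℝ)+1)) = 16 * (ξ * (1 - ξ)) * L / ((N:ℝ) + 1)
                by ring]
              ring
          _ < |ξ - m| := hev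
      exact absurd hcontr (lt_irrefl _)
    -- conclude membership
    have hmem : N ∈ Finset.Ico 1 t := Finset.mem_Ico.2 ⟨hN1, hNt⟩
    have hsum : ∑ i ∈ Finset.range N, Y i ω = ξ * (N:ℝ) := by
      rw [hxidef, div_mul_cancel₀]
      exact ne_of_gt hNpos
    apply Set.mem_biUnion hmem
    simp only [hUdef, hLodef, Set.mem_union, Set.mem_setOf_eq]
    rcases lt_abs.1 hdlt with hcase | hcase
    · left
      rw [hsum]
      linarith [mul_le_mul_of_nonneg_left hcase.le (le_of_lt hNpos)]
    · right
      rw [hsum]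
      linarith [mul_le_mul_of_nonneg_left hcase.le (le_of_lt hNpos)]
  -- final computation
  have hcard : (Finset.Ico 1 t).card = t - 1 := by
    rw [Nat.card_Ico]
  have htm1 : ((t - 1 : ℕ) : ℝ) = (t:ℝ) - 1 := by
    have h1 : (1:ℕ) ≤ t := ht
    push_cast [Nat.cast_sub h1]
    ring
  calc μ {ω | ∃ N < t,
        Real.sqrt (16 * (((∑ i ∈ Finset.range N, Y i ω) / N)
              * (1 - (∑ i ∈ Finset.range N, Y i ω) / N)) * L / (N + 1))
          + 24 * L / (N + 1)
        < |(∑ i ∈ Finset.range N, Y i ω) / N - m|}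
      ≤ μ (({ω | ∃ N < t,
        Real.sqrt (16 * (((∑ i ∈ Finset.range N, Y i ω) / N)
              * (1 - (∑ i ∈ Finset.range N, Y i ω) / N)) * L / (N + 1))
          + 24 * L / (N + 1)
        < |(∑ i ∈ Finset.range N, Y i ω) / N - m|} ∩ G) ∪ Gᶜ) := by
        apply measure_mono
        intro ω hω
        by_cases hg : ω ∈ G
        · exact Or.inl ⟨hω, hg⟩
        · exact Or.inr hg
    _ ≤ μ ({ω | ∃ N < t,
        Real.sqrt (16 * (((∑ i ∈ Finset.range N, Y i ω) / N)
              * (1 - (∑ i ∈ Finset.range N, Y i ω) / N)) * L / (N + 1))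
          + 24 * L / (N + 1)
        < |(∑ i ∈ Finset.range N, Y i ω) / N - m|} ∩ G) + μ Gᶜ := measure_union_le _ _
    _ = μ ({ω | ∃ N < t,
        Real.sqrt (16 * (((∑ i ∈ Finset.range N, Y i ω) / N)
              * (1 - (∑ i ∈ Finset.range N, Y i ω) / N)) * L / (N + 1))
          + 24 * L / (N + 1)
        < |(∑ i ∈ Finset.range N, Y i ω) / N - m|} ∩ G) := by rw [hG0, add_zero]
    _ ≤ μ (⋃ N ∈ Finset.Ico 1 t, (U N ∪ Lo N)) := measure_mono hsub
    _ ≤ ∑ N ∈ Finset.Ico 1 t, μ (U N ∪ Lo N) := measure_biUnion_finset_le _ _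
    _ ≤ ∑ N ∈ Finset.Ico 1 t, ENNReal.ofReal (2/((t:ℝ)+1)^4) := by
        apply Finset.sum_le_sum
        intro N hN
        exact le_trans (measure_union_le _ _) (htail N (Finset.mem_Ico.1 hN).1)
    _ = (t - 1 : ℕ) • ENNReal.ofReal (2/((t:ℝ)+1)^4) := by
        rw [Finset.sum_const, hcard]
    _ = ENNReal.ofReal (((t:ℝ) - 1) * (2/((t:ℝ)+1)^4)) := by
        rw [nsmul_eq_mul, ← htm1, ← ENNReal.ofReal_natCast (t-1),
          ← ENNReal.ofReal_mul (by positivity)]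
    _ ≤ ENNReal.ofReal (3 / ((t:ℝ) + 1) ^ 3) := by
        apply ENNReal.ofReal_le_ofReal
        rw [show ((t:ℝ)-1) * (2/((t:ℝ)+1)^4) = (2*((t:ℝ)-1))/((t:ℝ)+1)^4 by ring]
        rw [div_le_div_iff₀ (by positivity) (by positivity)]
        nlinarith [pow_pos (show (0:ℝ) < (t:ℝ)+1 by linarith) 3,
          pow_pos (show (0:ℝ) < (t:ℝ)+1 by linarith) 4]
end
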